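/- arXiv:math/0612770 — 4 statements merged into one kernel-verified Lean document; each statement's English description precedes it below -/
import Mathlib

section
/- The map that sends a finitely supported function ν : X → ℕ to the finite list of vectors (ν(x)·x) for x in the support of ν, listed in increasing order of the slope x₂/x₁, is a bijection from the set of finitely supported functions ν : X → ℕ onto the set of finite lists (w⁽¹⁾,…,w⁽ᵐ⁾) of nonzero vectors of ℕ×ℕ satisfying w⁽ⁱ⁾₁·w⁽ⁱ⁺¹⁾₂ > w⁽ⁱ⁾₂·w⁽ⁱ⁺¹⁾₁ for all 1 ≤ i < m (i.e., onto the edge-vector lists of convex polygonal lines issuing from 0 whose sides make angles in [0,π/2] with the horizontal axis, listed in strictly increasing order of slope). -/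
/-- The set of pairs of coprime nonnegative integers (including `(0,1)` and `(1,0)`). -/
abbrev Xc : Type := {x : ℕ × ℕ // Nat.gcd x.1 x.2 = 1}

/-- `a` has strictly smaller slope than `b` (slope of `x` is `x₂/x₁`, with slope `∞` for `x₁ = 0`). -/
def slopeLt (a b : Xc) : Prop := a.val.2 * b.val.1 < b.val.2 * a.val.1

/-- `L` is the list of the vectors `ν(x)·x`, for `x` in the support of `ν`, listed in
increasing order of the slope `x₂/x₁`. -/
def IsEdgeList (ν : Xc →₀ ℕ) (L : List (ℕ × ℕ)) : Prop :=
  ∃ xs : List Xc, xs.toFinset = ν.support ∧ xs.Chain' slopeLt ∧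
    L = xs.map fun x => (ν x * x.val.1, ν x * x.val.2)

/-- `L` is a list `(w⁽¹⁾, …, w⁽ᵐ⁾)` of nonzero vectors of `ℕ × ℕ` with
`w⁽ⁱ⁾₁·w⁽ⁱ⁺¹⁾₂ > w⁽ⁱ⁾₂·w⁽ⁱ⁺¹⁾₁` for all `1 ≤ i < m`, i.e. the edge-vector list of a convex
polygonal line issuing from `0` whose sides make angles in `[0, π/2]` with the horizontal
axis, listed in strictly increasing order of slope. -/
def ConvexEdgeList (L : List (ℕ × ℕ)) : Prop :=
  (∀ w ∈ L, w ≠ (0, 0)) ∧ L.Chain' fun v w => v.1 * w.2 > v.2 * w.1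

/-!
Every nonzero `w ∈ ℕ²` is uniquely `gcd(w) • x` with `x ∈ X`, and for positive multiples the
condition `w₁ w'₂ > w₂ w'₁` says exactly that the primitive parts have strictly increasing slope.
So the slope-sorted support of `ν` yields a convex edge list, and conversely a convex edge list
`L` is recovered from `ν(primitive w) = gcd(w)`, `w ∈ L`: the primitive parts of `L` are
distinct and already sorted, so sorting the support of this `ν` gives them back in order.
-/

theorem Finsupp.list_sum_map_single_apply {ι α M : Type*} [AddCommMonoid M] {l : List ι}
    {f : ι → α} (hf : (l.map f).Nodup) (g : ι → M) {i : ι} (hi : i ∈ l) :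
    (l.map fun j => single (f j) (g j)).sum (f i) = g i := by
  classical
  rw [← List.sum_toFinset _ (hf.of_map f), Finsupp.finsetSum_apply,
    Finset.sum_eq_single_of_mem i (List.mem_toFinset.2 hi), single_eq_same]
  intro j hj hji
  exact single_eq_of_ne' (List.inj_on_of_nodup_map hf (List.mem_toFinset.1 hj) hi |>.mt hji)

theorem Finsupp.support_list_sum_map_single {ι α M : Type*} [AddCommMonoid M] [DecidableEq α]
    {l : List ι} {f : ι → α} (hf : (l.map f).Nodup) {g : ι → M} (hg : ∀ j ∈ l, g j ≠ 0) :
    (l.map fun j => single (f j) (g j)).sum.support = (l.map f).toFinset := by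
  classical
  ext x
  rw [mem_support_iff, List.mem_toFinset, List.mem_map]
  constructor
  · intro hx
    by_contra! hfx
    refine hx ?_
    rw [← List.sum_toFinset _ (hf.of_map f), Finsupp.finsetSum_apply]
    exact Finset.sum_eq_zero fun j hj => single_eq_of_ne' (hfx j (List.mem_toFinset.1 hj))
  · rintro ⟨j, hj, rfl⟩
    rw [list_sum_map_single_apply hf g hj]
    exact hg j hj

theorem Xc.eq_of_cross_eq {a b : Xc} (h : a.val.2 * b.val.1 = b.val.2 * a.val.1) : a = b := by
  obtain ⟨⟨a₁, a₂⟩, ha⟩ := a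
  obtain ⟨⟨b₁, b₂⟩, hb⟩ := b
  have ha' : Nat.Coprime a₁ a₂ := ha
  have hb' : Nat.Coprime b₁ b₂ := hb
  simp only at h
  have h₁ : a₁ = b₁ := Nat.dvd_antisymm (ha'.dvd_of_dvd_mul_left ⟨b₂, by linarith⟩)
    (hb'.dvd_of_dvd_mul_left ⟨a₂, by linarith⟩)
  have h₂ : a₂ = b₂ := Nat.dvd_antisymm (ha'.symm.dvd_of_dvd_mul_left ⟨b₁, by linarith⟩)
    (hb'.symm.dvd_of_dvd_mul_left ⟨a₁, by linarith⟩)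
  subst h₁ h₂
  rfl

def slopeLE (a b : Xc) : Prop := a.val.2 * b.val.1 ≤ b.val.2 * a.val.1

instance : DecidableRel slopeLE := fun _ _ => Nat.decLe _ _

theorem slopeLE_trans {a b c : Xc} (hab : slopeLE a b) (hbc : slopeLE b c) : slopeLE a c := by
  unfold slopeLE at *
  rcases Nat.eq_zero_or_pos b.val.1 with hb₁ | hb₁
  · have hb₂ : b.val.2 = 1 := by simpa [hb₁] using b.prop
    have hc₁ : c.val.1 = 0 := by simpa [hb₁, hb₂] using hbc
    simp [hc₁]
  · refine Nat.le_of_mul_le_mul_left ?_ hb₁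
    nlinarith [Nat.mul_le_mul_right c.val.1 hab, Nat.mul_le_mul_right a.val.1 hbc]

instance : IsTrans Xc slopeLE := ⟨fun _ _ _ => slopeLE_trans⟩

instance : Std.Antisymm slopeLE := ⟨fun _ _ h₁ h₂ => Xc.eq_of_cross_eq (Nat.le_antisymm h₁ h₂)⟩

instance : Std.Total slopeLE := ⟨fun _ _ => Nat.le_total _ _⟩

theorem slopeLt_iff_slopeLE_and_ne {a b : Xc} : slopeLt a b ↔ slopeLE a b ∧ a ≠ b := by
  refine ⟨fun h => ⟨h.le, ?_⟩, fun ⟨h, hne⟩ => h.lt_of_ne fun he => hne (Xc.eq_of_cross_eq he)⟩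
  rintro rfl
  exact lt_irrefl _ h

theorem slopeLt.trans {a b c : Xc} (hab : slopeLt a b) (hbc : slopeLt b c) : slopeLt a c := by
  rw [slopeLt_iff_slopeLE_and_ne] at *
  refine ⟨slopeLE_trans hab.1 hbc.1, ?_⟩
  rintro rfl
  exact hab.2 (antisymm hab.1 hbc.1)

instance : IsTrans Xc slopeLt := ⟨fun _ _ _ => slopeLt.trans⟩

theorem ne_of_slopeLt {a b : Xc} (h : slopeLt a b) : a ≠ b :=
  (slopeLt_iff_slopeLE_and_ne.1 h).2

theorem pairwise_slopeLt_sort (s : Finset Xc) : (s.sort slopeLE).Pairwise slopeLt :=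
  ((s.pairwise_sort slopeLE).and (s.sort_nodup slopeLE)).imp
    (slopeLt_iff_slopeLE_and_ne.2 ·)

def scale (c : ℕ) (x : Xc) : ℕ × ℕ := (c * x.val.1, c * x.val.2)

theorem gcd_scale (c : ℕ) (x : Xc) : Nat.gcd (scale c x).1 (scale c x).2 = c := by
  rw [scale, Nat.gcd_mul_left, x.prop, mul_one]

theorem scale_ne_zero {c : ℕ} (hc : c ≠ 0) (x : Xc) : scale c x ≠ (0, 0) := by
  intro h
  apply hc
  rw [← gcd_scale c x, h, Nat.gcd_zero_left]

theorem cross_scale_lt_iff {c d : ℕ} (hc : 0 < c) (hd : 0 < d) (a b : Xc) :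
    (scale c a).2 * (scale d b).1 < (scale c a).1 * (scale d b).2 ↔ slopeLt a b := by
  have key : ∀ m n : ℕ, (c * m) * (d * n) = (c * d) * (m * n) := fun m n => by ring
  simp only [scale, key, slopeLt, mul_comm b.val.2]
  exact Nat.mul_lt_mul_left (Nat.mul_pos hc hd)

theorem gcd_ne_zero_of_ne_zero {w : ℕ × ℕ} (hw : w ≠ (0, 0)) : Nat.gcd w.1 w.2 ≠ 0 := by
  rw [Ne, Nat.gcd_eq_zero_iff]
  exact fun ⟨h₁, h₂⟩ => hw (Prod.ext h₁ h₂)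

/-- The primitive vector on the ray through `w`; junk value `(0, 1)` at `w = 0`. -/
def primitive (w : ℕ × ℕ) : Xc :=
  if h : Nat.gcd w.1 w.2 = 0 then ⟨(0, 1), rfl⟩
  else ⟨(w.1 / Nat.gcd w.1 w.2, w.2 / Nat.gcd w.1 w.2),
    Nat.coprime_div_gcd_div_gcd (Nat.pos_of_ne_zero h)⟩

theorem primitive_scale {c : ℕ} (hc : c ≠ 0) (x : Xc) : primitive (scale c x) = x := by
  rw [primitive, dif_neg (by rwa [gcd_scale])]
  apply Subtype.ext
  simp only [gcd_scale]
  exact Prod.ext (Nat.mul_div_cancel_left _ (Nat.pos_of_ne_zero hc))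
    (Nat.mul_div_cancel_left _ (Nat.pos_of_ne_zero hc))

theorem scale_gcd_primitive {w : ℕ × ℕ} (hw : w ≠ (0, 0)) :
    scale (Nat.gcd w.1 w.2) (primitive w) = w := by
  rw [primitive, dif_neg (gcd_ne_zero_of_ne_zero hw), scale]
  exact Prod.ext (Nat.mul_div_cancel' (Nat.gcd_dvd_left _ _))
    (Nat.mul_div_cancel' (Nat.gcd_dvd_right _ _))

noncomputable def edgeList (ν : Xc →₀ ℕ) : List (ℕ × ℕ) :=
  (ν.support.sort slopeLE).map fun x => scale (ν x) x

noncomputable def ofEdgeList (L : List (ℕ × ℕ)) : Xc →₀ ℕ :=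
  (L.map fun w => Finsupp.single (primitive w) (Nat.gcd w.1 w.2)).sum

theorem isEdgeList_edgeList (ν : Xc →₀ ℕ) : IsEdgeList ν (edgeList ν) :=
  ⟨ν.support.sort slopeLE, Finset.sort_toFinset _ _, (pairwise_slopeLt_sort _).isChain, rfl⟩

theorem convexEdgeList_edgeList (ν : Xc →₀ ℕ) : ConvexEdgeList (edgeList ν) := by
  constructor
  · simp only [edgeList, List.mem_map, Finset.mem_sort, Finsupp.mem_support_iff]
    rintro _ ⟨x, hx, rfl⟩
    exact scale_ne_zero hx x
  · refine (List.isChain_map _).2 ((pairwise_slopeLt_sort _).imp_of_mem ?_).isChain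
    intro a b ha hb hab
    rw [Finset.mem_sort, Finsupp.mem_support_iff] at ha hb
    exact (cross_scale_lt_iff (Nat.pos_of_ne_zero ha) (Nat.pos_of_ne_zero hb) a b).2 hab

theorem ofEdgeList_edgeList (ν : Xc →₀ ℕ) : ofEdgeList (edgeList ν) = ν := by
  have hterm : ∀ x ∈ ν.support.sort slopeLE,
      Finsupp.single (primitive (scale (ν x) x)) (Nat.gcd (scale (ν x) x).1 (scale (ν x) x).2)
        = Finsupp.single x (ν x) := by
    intro x hx
    rw [Finset.mem_sort, Finsupp.mem_support_iff] at hx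
    rw [primitive_scale hx, gcd_scale]
  calc ofEdgeList (edgeList ν)
      = ((ν.support.sort slopeLE).map fun x => Finsupp.single x (ν x)).sum := by
        rw [ofEdgeList, edgeList, List.map_map]
        exact congrArg _ (List.map_congr_left hterm)
    _ = ν := by
        rw [← List.sum_toFinset _ (Finset.sort_nodup _ _), Finset.sort_toFinset]
        exact ν.sum_single

theorem pairwise_slopeLt_map_primitive {L : List (ℕ × ℕ)} (hL : ConvexEdgeList L) :
    (L.map primitive).Pairwise slopeLt := by
  refine List.IsChain.pairwise ?_
  rw [List.isChain_map]
  refine hL.2.imp_of_mem_imp fun v w hv hw hvw => ?_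
  rw [← cross_scale_lt_iff (Nat.pos_of_ne_zero (gcd_ne_zero_of_ne_zero (hL.1 v hv)))
    (Nat.pos_of_ne_zero (gcd_ne_zero_of_ne_zero (hL.1 w hw))),
    scale_gcd_primitive (hL.1 v hv), scale_gcd_primitive (hL.1 w hw)]
  exact hvw

theorem edgeList_ofEdgeList {L : List (ℕ × ℕ)} (hL : ConvexEdgeList L) :
    edgeList (ofEdgeList L) = L := by
  have hsorted := pairwise_slopeLt_map_primitive hL
  have hnodup : (L.map primitive).Nodup := hsorted.imp ne_of_slopeLt
  have hsupp : (ofEdgeList L).support = (L.map primitive).toFinset :=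
    Finsupp.support_list_sum_map_single hnodup fun w hw => gcd_ne_zero_of_ne_zero (hL.1 w hw)
  have hterm : ∀ w ∈ L, scale (ofEdgeList L (primitive w)) (primitive w) = w := fun w hw => by
    rw [ofEdgeList, Finsupp.list_sum_map_single_apply hnodup _ hw, scale_gcd_primitive (hL.1 w hw)]
  rw [edgeList, hsupp, (List.toFinset_sort slopeLE hnodup).2 (hsorted.imp le_of_lt), List.map_map]
  exact (List.map_congr_left hterm).trans L.map_id

/-- The map sending a finitely supported `ν : X →₀ ℕ` to the list of the vectors `ν(x)·x`,
`x ∈ supp ν`, in increasing order of slope, is a bijection onto the set of edge-vector lists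
of convex polygonal lines. -/
theorem statement0 :
    ∃ F : (Xc →₀ ℕ) → List (ℕ × ℕ),
      (∀ ν : Xc →₀ ℕ, IsEdgeList ν (F ν)) ∧
      Set.BijOn F Set.univ {L : List (ℕ × ℕ) | ConvexEdgeList L} :=
  ⟨edgeList, isEdgeList_edgeList,
    Set.InvOn.bijOn ⟨fun ν _ => ofEdgeList_edgeList ν, fun _ hL => edgeList_ofEdgeList hL⟩
      (fun ν _ => convexEdgeList_edgeList ν) (fun _ _ => trivial)⟩
end

section
/- Let (u_n) be a sequence of positive integers with u_n → ∞ and u_n = o(n^{2/3}). Then ln 𝒩(n, n, u_n) = (1 + o(1))·u_n·ln(n²/u_n³) as n → ∞; equivalently, 𝒩(n,n,u_n) = (n²/u_n³)^{u_n(1+o(1))}. -/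
open Real Filter Asymptotics

/-- The endpoint of the convex chain encoded by a finitely supported `ν : X →₀ ℕ`. -/
def chainEndpoint (ν : Xc →₀ ℕ) : ℕ × ℕ :=
  (ν.sum fun x m => m * x.val.1, ν.sum fun x m => m * x.val.2)

/-- `𝒩(n₁,n₂,N)`: the number of convex chains with endpoint `(n₁,n₂)` and `N` vertices. -/
noncomputable def numChains (n₁ n₂ N : ℕ) : ℕ :=
  Nat.card {ν : Xc →₀ ℕ // chainEndpoint ν = (n₁, n₂) ∧ ν.support.card = N}

open Finset Topology

-- key decode lemma
lemma key_decode {x y : Xc} {a b : ℕ} (h1 : a * x.val.1 = b * y.val.1)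
    (h2 : a * x.val.2 = b * y.val.2) : a = b := by
  have := x.prop; have := y.prop
  calc a = Nat.gcd (a * x.val.1) (a * x.val.2) := by
        rw [Nat.gcd_mul_left, x.prop, mul_one]
    _ = Nat.gcd (b * y.val.1) (b * y.val.2) := by rw [h1, h2]
    _ = b := by rw [Nat.gcd_mul_left, y.prop, mul_one]

lemma key_decode' {x y : Xc} {a b : ℕ} (ha : a ≠ 0) (h1 : a * x.val.1 = b * y.val.1)
    (h2 : a * x.val.2 = b * y.val.2) : a = b ∧ x = y := by
  have hab := key_decode h1 h2
  subst hab
  refine ⟨rfl, ?_⟩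
  ext
  · exact Nat.eq_of_mul_eq_mul_left (Nat.pos_of_ne_zero ha) h1
  · exact Nat.eq_of_mul_eq_mul_left (Nat.pos_of_ne_zero ha) h2

noncomputable def enc (ν : Xc →₀ ℕ) : Finset ℕ :=
  ν.support.image fun x => Nat.pair (ν x * x.val.1) (ν x * x.val.2)

lemma enc_injOn (ν : Xc →₀ ℕ) :
    Set.InjOn (fun x : Xc => Nat.pair (ν x * x.val.1) (ν x * x.val.2)) ν.support := by
  intro x hx y hy h
  simp only [Nat.pair_eq_pair] at h
  exact (key_decode' (Finsupp.mem_support_iff.mp hx) h.1 h.2).2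

lemma enc_card (ν : Xc →₀ ℕ) : (enc ν).card = ν.support.card :=
  Finset.card_image_of_injOn (enc_injOn ν)

lemma enc_injective : Function.Injective enc := by
  intro ν ν' h
  have main : ∀ (μ μ' : Xc →₀ ℕ), enc μ = enc μ' → ∀ x ∈ μ.support, μ x = μ' x := by
    intro μ μ' hμ x hx
    have hmem : Nat.pair (μ x * x.val.1) (μ x * x.val.2) ∈ enc μ' := by
      rw [← hμ]; exact Finset.mem_image_of_mem _ hx
    obtain ⟨y, hy, hxy⟩ := Finset.mem_image.mp hmem
    simp only [Nat.pair_eq_pair] at hxy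
    obtain ⟨hab, hxx⟩ := key_decode' (Finsupp.mem_support_iff.mp hy) hxy.1 hxy.2
    subst hxx
    exact hab.symm
  ext x
  by_cases hx : x ∈ ν.support
  · exact main ν ν' h x hx
  · by_cases hx' : x ∈ ν'.support
    · exact ((main ν' ν h.symm x hx')).symm
    · simp [Finsupp.notMem_support_iff.mp hx, Finsupp.notMem_support_iff.mp hx']

lemma enc_sum_fst (ν : Xc →₀ ℕ) :
    ∑ k ∈ enc ν, (Nat.unpair k).1 = ν.sum fun x m => m * x.val.1 := by
  rw [enc, Finset.sum_image (enc_injOn ν)]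
  simp [Finsupp.sum]

lemma enc_sum_snd (ν : Xc →₀ ℕ) :
    ∑ k ∈ enc ν, (Nat.unpair k).2 = ν.sum fun x m => m * x.val.2 := by
  rw [enc, Finset.sum_image (enc_injOn ν)]
  simp [Finsupp.sum]

-- partial sums map
def psum (u : ℕ) (g : Fin u → ℕ) (i : Fin u) : ℕ :=
  i.val + ∑ j ∈ Finset.range (i.val + 1), (if h : j < u then g ⟨j, h⟩ else 0)

lemma psum_strictMono (u : ℕ) (g : Fin u → ℕ) : StrictMono (psum u g) := by
  intro i i' hii
  unfold psum
  have : (i.val + 1) ≤ i'.val := hii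
  exact Nat.add_lt_add_of_lt_of_le hii
    (Finset.sum_le_sum_of_subset (Finset.range_subset_range.mpr (by omega)))

lemma psum_lt (u n : ℕ) (g : Fin u → ℕ) (hg : ∑ i, g i = n) (i : Fin u) :
    psum u g i < n + u := by
  unfold psum
  have h1 : ∑ j ∈ Finset.range (i.val + 1), (if h : j < u then g ⟨j, h⟩ else 0)
      ≤ ∑ j ∈ Finset.range u, (if h : j < u then g ⟨j, h⟩ else 0) :=
    Finset.sum_le_sum_of_subset (Finset.range_subset_range.mpr (by omega))
  have h2 : ∑ j ∈ Finset.range u, (if h : j < u then g ⟨j, h⟩ else 0) = n := by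
    rw [← hg, Finset.sum_range fun j => _]
    · exact Finset.sum_congr rfl fun j _ => by simp
  have := i.isLt
  omega

lemma psum_inj (u : ℕ) : Function.Injective (psum u) := by
  intro g g' h
  have hs : ∀ k ≤ u, ∑ j ∈ Finset.range k, (if h : j < u then g ⟨j, h⟩ else 0)
      = ∑ j ∈ Finset.range k, (if h : j < u then g' ⟨j, h⟩ else 0) := by
    intro k hk
    match k, hk with
    | 0, _ => simp
    | (k+1), hk =>
      have := congrFun h ⟨k, hk⟩
      unfold psum at this
      simpa using this
  funext i
  have h1 := hs (i.val + 1) i.isLt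
  have h2 := hs i.val (le_of_lt i.isLt)
  rw [Finset.sum_range_succ, Finset.sum_range_succ] at h1
  rw [h2] at h1
  have := Nat.add_left_cancel h1
  simpa [i.isLt] using this

lemma comp_card_le (u n : ℕ) :
    Nat.card {g : Fin u → ℕ // ∑ i, g i = n} ≤ (n + u).choose u := by
  classical
  set T := ((Finset.range (n + u)).powersetCard u)
  have : ∀ g : {g : Fin u → ℕ // ∑ i, g i = n},
      Finset.image (psum u g.val) Finset.univ ∈ T := by
    intro g
    rw [Finset.mem_powersetCard]
    constructor
    · intro k hk
      obtain ⟨i, _, rfl⟩ := Finset.mem_image.mp hk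
      exact Finset.mem_range.mpr (psum_lt u n g.val g.prop i)
    · rw [Finset.card_image_of_injective _ (psum_strictMono u g.val).injective,
        Finset.card_univ, Fintype.card_fin]
  have hinj : Function.Injective
      (fun g : {g : Fin u → ℕ // ∑ i, g i = n} =>
        (⟨Finset.image (psum u g.val) Finset.univ, this g⟩ : {s // s ∈ T})) := by
    intro g g' hgg
    have him : Finset.image (psum u g.val) Finset.univ
        = Finset.image (psum u g'.val) Finset.univ := congrArg Subtype.val hgg
    have hcard : (Finset.image (psum u g.val) Finset.univ).card = u := by
      rw [Finset.card_image_of_injective _ (psum_strictMono u g.val).injective,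
        Finset.card_univ, Fintype.card_fin]
    have e1 : psum u g.val = (Finset.image (psum u g.val) Finset.univ).orderEmbOfFin hcard := by
      apply Finset.orderEmbOfFin_unique hcard _ (psum_strictMono u g.val)
      intro i; exact Finset.mem_image_of_mem _ (Finset.mem_univ i)
    have hcard' : (Finset.image (psum u g.val) Finset.univ).card = u := hcard
    have e2 : psum u g'.val = (Finset.image (psum u g.val) Finset.univ).orderEmbOfFin hcard := by
      apply Finset.orderEmbOfFin_unique hcard _ (psum_strictMono u g'.val)
      intro i; rw [him]; exact Finset.mem_image_of_mem _ (Finset.mem_univ i)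
    exact Subtype.ext (psum_inj u (e1.trans e2.symm))
  calc Nat.card {g : Fin u → ℕ // ∑ i, g i = n} ≤ Nat.card {s // s ∈ T} :=
        Nat.card_le_card_of_injective _ hinj
    _ = T.card := by rw [Nat.card_eq_fintype_card, Fintype.card_coe]
    _ = (n + u).choose u := by
        rw [Finset.card_powersetCard, Finset.card_range]

instance comp_finite (u n : ℕ) : Finite {g : Fin u → ℕ // ∑ i, g i = n} := by
  classical
  have hb : ∀ (g : {g : Fin u → ℕ // ∑ i, g i = n}) (i : Fin u), g.val i ≤ n := by
    intro g i
    conv_rhs => rw [← g.prop]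
    exact Finset.single_le_sum (fun j _ => Nat.zero_le _) (Finset.mem_univ i)
  refine Finite.of_injective
    (fun g => (fun i => (⟨g.val i, Nat.lt_succ_of_le (hb g i)⟩ : Fin (n+1)))) ?_
  intro g g' h
  apply Subtype.ext; funext i
  have := congrFun h i
  simpa using congrArg Fin.val this

abbrev Cset (n u : ℕ) : Type :=
  {ν : Xc →₀ ℕ // chainEndpoint ν = (n, n) ∧ ν.support.card = u}

abbrev Tup (n u : ℕ) : Type :=
  {f : Fin u → ℕ // (∑ i, (Nat.unpair (f i)).1 = n) ∧ (∑ i, (Nat.unpair (f i)).2 = n)}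

instance tup_finite (n u : ℕ) : Finite (Tup n u) := by
  refine Finite.of_injective (fun f =>
    ((⟨fun i => (Nat.unpair (f.val i)).1, f.prop.1⟩ : {g : Fin u → ℕ // ∑ i, g i = n}),
     (⟨fun i => (Nat.unpair (f.val i)).2, f.prop.2⟩ : {g : Fin u → ℕ // ∑ i, g i = n}))) ?_
  intro f f' h
  simp only [Prod.mk.injEq, Subtype.mk.injEq] at h
  apply Subtype.ext; funext i
  have h1 := congrFun h.1 i
  have h2 := congrFun h.2 i
  have := Nat.pair_unpair (f.val i)
  have := Nat.pair_unpair (f'.val i)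
  rw [← Nat.pair_unpair (f.val i), ← Nat.pair_unpair (f'.val i), h1, h2]


lemma sum_orderIso_perm {u : ℕ} (s : Finset ℕ) (h : s.card = u) (σ : Equiv.Perm (Fin u))
    (f : ℕ → ℕ) : ∑ i, f ((s.orderIsoOfFin h) (σ i) : ℕ) = ∑ k ∈ s, f k := by
  rw [← Finset.sum_coe_sort s f]
  exact Equiv.sum_comp (σ.trans (s.orderIsoOfFin h).toEquiv) (fun k => f k.val)

noncomputable def chainTup (n u : ℕ) (ν : Cset n u) (σ : Equiv.Perm (Fin u)) : Tup n u :=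
  ⟨fun i => ((enc ν.val).orderIsoOfFin (by rw [enc_card, ν.prop.2]) (σ i) : ℕ), by
    rw [sum_orderIso_perm _ _ σ (fun k => (Nat.unpair k).1), enc_sum_fst]
    exact congrArg Prod.fst ν.prop.1, by
    rw [sum_orderIso_perm _ _ σ (fun k => (Nat.unpair k).2), enc_sum_snd]
    exact congrArg Prod.snd ν.prop.1⟩

lemma chainTup_inj (n u : ℕ) : Function.Injective
    (fun p : Cset n u × Equiv.Perm (Fin u) => chainTup n u p.1 p.2) := by
  rintro ⟨ν, σ⟩ ⟨ν', σ'⟩ hh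
  have h : ∀ i : Fin u, ((enc ν.val).orderIsoOfFin (by rw [enc_card, ν.prop.2]) (σ i) : ℕ)
      = ((enc ν'.val).orderIsoOfFin (by rw [enc_card, ν'.prop.2]) (σ' i) : ℕ) :=
    fun i => congrFun (congrArg Subtype.val hh) i
  have hrange : enc ν.val = enc ν'.val := by
    apply Finset.ext
    intro k
    constructor
    · intro hk
      obtain ⟨j, hj⟩ := ((enc ν.val).orderIsoOfFin
        (by rw [enc_card, ν.prop.2])).surjective ⟨k, hk⟩
      have := h (σ.symm j)
      simp only [Equiv.apply_symm_apply, hj] at this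
      rw [show k = ((enc ν'.val).orderIsoOfFin (by rw [enc_card, ν'.prop.2])
        (σ' (σ.symm j)) : ℕ) from this]
      exact Subtype.coe_prop _
    · intro hk
      obtain ⟨j, hj⟩ := ((enc ν'.val).orderIsoOfFin
        (by rw [enc_card, ν'.prop.2])).surjective ⟨k, hk⟩
      have := (h (σ'.symm j)).symm
      simp only [Equiv.apply_symm_apply, hj] at this
      rw [show k = ((enc ν.val).orderIsoOfFin (by rw [enc_card, ν.prop.2])
        (σ (σ'.symm j)) : ℕ) from this]
      exact Subtype.coe_prop _
  have hν : ν = ν' := Subtype.ext (enc_injective hrange)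
  subst hν
  refine Prod.ext rfl ?_
  apply Equiv.ext
  intro i
  have hi := h i
  exact (Finset.orderIsoOfFin _ _).injective (Subtype.coe_injective hi)

instance cset_finite (n u : ℕ) : Finite (Cset n u) :=
  Finite.of_injective (fun ν => chainTup n u ν 1) (fun ν ν' h => by
    have := chainTup_inj n u (a₁ := (ν, 1)) (a₂ := (ν', 1)) h
    exact congrArg Prod.fst this)

lemma upper_nat (n u : ℕ) :
    u.factorial * numChains n n u ≤ ((n + u).choose u) ^ 2 := by
  have h1 : Nat.card (Cset n u × Equiv.Perm (Fin u)) ≤ Nat.card (Tup n u) :=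
    Nat.card_le_card_of_injective _ (chainTup_inj n u)
  rw [Nat.card_prod] at h1
  have hperm : Nat.card (Equiv.Perm (Fin u)) = u.factorial := by
    rw [Nat.card_eq_fintype_card, Fintype.card_perm, Fintype.card_fin]
  have h2 : Nat.card (Tup n u) ≤ ((n + u).choose u) ^ 2 := by
    have hinj : Function.Injective (fun f : Tup n u =>
      ((⟨fun i => (Nat.unpair (f.val i)).1, f.prop.1⟩ : {g : Fin u → ℕ // ∑ i, g i = n}),
       (⟨fun i => (Nat.unpair (f.val i)).2, f.prop.2⟩ : {g : Fin u → ℕ // ∑ i, g i = n}))) := by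
      intro f f' h
      simp only [Prod.mk.injEq, Subtype.mk.injEq] at h
      apply Subtype.ext; funext i
      rw [← Nat.pair_unpair (f.val i), ← Nat.pair_unpair (f'.val i),
        congrFun h.1 i, congrFun h.2 i]
    calc Nat.card (Tup n u)
        ≤ Nat.card ({g : Fin u → ℕ // ∑ i, g i = n} × {g : Fin u → ℕ // ∑ i, g i = n}) :=
          Nat.card_le_card_of_injective _ hinj
      _ = Nat.card {g : Fin u → ℕ // ∑ i, g i = n} * Nat.card {g : Fin u → ℕ // ∑ i, g i = n} :=
          Nat.card_prod _ _
      _ ≤ ((n + u).choose u) * ((n + u).choose u) :=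
          Nat.mul_le_mul (comp_card_le u n) (comp_card_le u n)
      _ = ((n + u).choose u) ^ 2 := (sq _).symm
  calc u.factorial * numChains n n u = Nat.card (Cset n u) * Nat.card (Equiv.Perm (Fin u)) := by
        rw [hperm, numChains, Nat.mul_comm]
  _ ≤ ((n + u).choose u) ^ 2 := le_trans h1 h2

def e1 : Xc := ⟨(1, 0), by simp⟩
def e2 : Xc := ⟨(0, 1), by simp⟩

/-- the box of coprime pairs with both coordinates in `(0, A]`, as a finset of `Xc` -/
def boxc (A : ℕ) : Finset Xc :=
  ((Finset.Ioc 0 A ×ˢ Finset.Ioc 0 A).subtype (fun x => Nat.gcd x.1 x.2 = 1))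

lemma mem_boxc {A : ℕ} {x : Xc} : x ∈ boxc A ↔
    x.val.1 ∈ Finset.Ioc 0 A ∧ x.val.2 ∈ Finset.Ioc 0 A := by
  simp [boxc, Finset.mem_subtype, Finset.mem_product]

lemma e1_notMem_boxc {A : ℕ} : e1 ∉ boxc A := by
  simp [mem_boxc, e1]
lemma e2_notMem_boxc {A : ℕ} : e2 ∉ boxc A := by
  simp [mem_boxc, e2]
lemma e1_ne_e2 : e1 ≠ e2 := by
  simp [e1, e2, Subtype.ext_iff]

section lower

/-- the chain associated to a set `S` of coprime vectors. -/
noncomputable def nuOf (n : ℕ) (S : Finset Xc) (h1 : ∑ y ∈ S, y.val.1 < n)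
    (h2 : ∑ y ∈ S, y.val.2 < n) (hS1 : e1 ∉ S) (hS2 : e2 ∉ S) : Xc →₀ ℕ :=
  Finsupp.mk (S ∪ {e1, e2})
    (fun x => if x = e1 then n - ∑ y ∈ S, y.val.1
      else if x = e2 then n - ∑ y ∈ S, y.val.2
      else if x ∈ S then 1 else 0)
    (by
      intro a
      classical
      show a ∈ S ∪ {e1, e2} ↔
        (if a = e1 then n - ∑ y ∈ S, y.val.1
          else if a = e2 then n - ∑ y ∈ S, y.val.2
          else if a ∈ S then 1 else 0) ≠ 0
      constructor
      · intro ha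
        rcases Finset.mem_union.mp ha with haS | hae
        · have ha1 : a ≠ e1 := fun h => hS1 (h ▸ haS)
          have ha2 : a ≠ e2 := fun h => hS2 (h ▸ haS)
          rw [if_neg ha1, if_neg ha2, if_pos haS]
          omega
        · rcases Finset.mem_insert.mp hae with rfl | hae
          · rw [if_pos rfl]; omega
          · rcases Finset.mem_singleton.mp hae with rfl
            rw [if_neg (Ne.symm e1_ne_e2), if_pos rfl]; omega
      · intro ha
        by_contra hmem
        have ha1 : a ≠ e1 := fun h => hmem (h ▸ Finset.mem_union_right _ (by simp))
        have ha2 : a ≠ e2 := fun h => hmem (h ▸ Finset.mem_union_right _ (by simp))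
        have haS : a ∉ S := fun h => hmem (Finset.mem_union_left _ h)
        rw [if_neg ha1, if_neg ha2, if_neg haS] at ha
        exact ha rfl)

variable {n u A : ℕ} {S : Finset Xc}

lemma nuOf_support (h1 : ∑ y ∈ S, y.val.1 < n) (h2 : ∑ y ∈ S, y.val.2 < n)
    (hS1 : e1 ∉ S) (hS2 : e2 ∉ S) :
    (nuOf n S h1 h2 hS1 hS2).support = S ∪ {e1, e2} := rfl

lemma nuOf_card (h1 : ∑ y ∈ S, y.val.1 < n) (h2 : ∑ y ∈ S, y.val.2 < n)
    (hS1 : e1 ∉ S) (hS2 : e2 ∉ S) :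
    (nuOf n S h1 h2 hS1 hS2).support.card = S.card + 2 := by
  classical
  rw [nuOf_support, Finset.card_union_of_disjoint, Finset.card_insert_of_notMem,
    Finset.card_singleton]
  · simp [e1_ne_e2]
  · simp only [Finset.disjoint_insert_right, Finset.disjoint_singleton_right]
    exact ⟨hS1, hS2⟩

lemma nuOf_endpoint (h1 : ∑ y ∈ S, y.val.1 < n) (h2 : ∑ y ∈ S, y.val.2 < n)
    (hS1 : e1 ∉ S) (hS2 : e2 ∉ S) :
    chainEndpoint (nuOf n S h1 h2 hS1 hS2) = (n, n) := by
  classical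
  set ν := nuOf n S h1 h2 hS1 hS2 with hν
  have hdisj : Disjoint S ({e1, e2} : Finset Xc) := by
    simp only [Finset.disjoint_insert_right, Finset.disjoint_singleton_right]
    exact ⟨hS1, hS2⟩
  have hval : ∀ x ∈ S, ν x = 1 := by
    intro x hx
    have hx1 : x ≠ e1 := fun h => hS1 (h ▸ hx)
    have hx2 : x ≠ e2 := fun h => hS2 (h ▸ hx)
    show (if x = e1 then n - ∑ y ∈ S, y.val.1
      else if x = e2 then n - ∑ y ∈ S, y.val.2
      else if x ∈ S then 1 else 0) = 1
    rw [if_neg hx1, if_neg hx2, if_pos hx]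
  have hve1 : ν e1 = n - ∑ y ∈ S, y.val.1 := by
    show (if e1 = e1 then n - ∑ y ∈ S, y.val.1
      else if e1 = e2 then n - ∑ y ∈ S, y.val.2
      else if e1 ∈ S then 1 else 0) = _
    rw [if_pos rfl]
  have hve2 : ν e2 = n - ∑ y ∈ S, y.val.2 := by
    show (if e2 = e1 then n - ∑ y ∈ S, y.val.1
      else if e2 = e2 then n - ∑ y ∈ S, y.val.2
      else if e2 ∈ S then 1 else 0) = _
    rw [if_neg (Ne.symm e1_ne_e2), if_pos rfl]
  have hsupp : ν.support = S ∪ {e1, e2} := rfl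
  unfold chainEndpoint
  have hs1 : (ν.sum fun x m => m * x.val.1) = n := by
    rw [Finsupp.sum, hsupp, Finset.sum_union hdisj, Finset.sum_pair e1_ne_e2]
    rw [Finset.sum_congr rfl fun x hx => by rw [hval x hx, one_mul]]
    rw [hve1, hve2]
    show (∑ y ∈ S, y.val.1) + ((n - ∑ y ∈ S, y.val.1) * 1 + (n - ∑ y ∈ S, y.val.2) * 0) = n
    omega
  have hs2 : (ν.sum fun x m => m * x.val.2) = n := by
    rw [Finsupp.sum, hsupp, Finset.sum_union hdisj, Finset.sum_pair e1_ne_e2]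
    rw [Finset.sum_congr rfl fun x hx => by rw [hval x hx, one_mul]]
    rw [hve1, hve2]
    show (∑ y ∈ S, y.val.2) + ((n - ∑ y ∈ S, y.val.1) * 0 + (n - ∑ y ∈ S, y.val.2) * 1) = n
    omega
  rw [hs1, hs2]

lemma lower_nat (hu : 2 ≤ u) (hA : u * A ≤ n - 1) (hn : 1 ≤ n) :
    ((boxc A).card).choose (u - 2) ≤ numChains n n u := by
  classical
  -- the injection from (u-2)-subsets of the box into chains
  have hsum : ∀ S : Finset Xc, S ∈ (boxc A).powersetCard (u - 2) →
      (∑ y ∈ S, y.val.1 < n ∧ ∑ y ∈ S, y.val.2 < n) ∧ (e1 ∉ S ∧ e2 ∉ S) := by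
    intro S hS
    rw [Finset.mem_powersetCard] at hS
    obtain ⟨hsub, hcard⟩ := hS
    have hb1 : ∑ y ∈ S, y.val.1 ≤ S.card * A := by
      calc ∑ y ∈ S, y.val.1 ≤ ∑ _y ∈ S, A :=
            Finset.sum_le_sum fun y hy => (Finset.mem_Ioc.mp (mem_boxc.mp (hsub hy)).1).2
        _ = S.card * A := by rw [Finset.sum_const, smul_eq_mul]
    have hb2 : ∑ y ∈ S, y.val.2 ≤ S.card * A := by
      calc ∑ y ∈ S, y.val.2 ≤ ∑ _y ∈ S, A :=
            Finset.sum_le_sum fun y hy => (Finset.mem_Ioc.mp (mem_boxc.mp (hsub hy)).2).2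
        _ = S.card * A := by rw [Finset.sum_const, smul_eq_mul]
    have hle : S.card * A ≤ u * A := Nat.mul_le_mul_right _ (by omega)
    refine ⟨⟨by omega, by omega⟩, fun h => e1_notMem_boxc (hsub h),
      fun h => e2_notMem_boxc (hsub h)⟩
  set F : {S // S ∈ (boxc A).powersetCard (u - 2)} → Cset n u := fun S =>
    ⟨nuOf n S.val (hsum S.val S.prop).1.1 (hsum S.val S.prop).1.2
      (hsum S.val S.prop).2.1 (hsum S.val S.prop).2.2,
     nuOf_endpoint _ _ _ _,
     by
      rw [nuOf_card]
      have := (Finset.mem_powersetCard.mp S.prop).2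
      omega⟩ with hF
  have hFinj : Function.Injective F := by
    intro S S' h
    have hsupp : (S.val : Finset Xc) ∪ {e1, e2} = S'.val ∪ {e1, e2} := by
      have := congrArg (fun ν : Cset n u => ν.val.support) h
      simpa [hF, nuOf_support] using this
    apply Subtype.ext
    have h1 := (hsum S.val S.prop).2
    have h2 := (hsum S'.val S'.prop).2
    have hd1 : Disjoint (S.val : Finset Xc) {e1, e2} := by
      simp only [Finset.disjoint_insert_right, Finset.disjoint_singleton_right]
      exact h1
    have hd2 : Disjoint (S'.val : Finset Xc) {e1, e2} := by
      simp only [Finset.disjoint_insert_right, Finset.disjoint_singleton_right]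
      exact h2
    calc S.val = (S.val ∪ {e1, e2}) \ {e1, e2} := by
          rw [Finset.union_sdiff_cancel_right hd1]
      _ = (S'.val ∪ {e1, e2}) \ {e1, e2} := by rw [hsupp]
      _ = S'.val := Finset.union_sdiff_cancel_right hd2
  calc ((boxc A).card).choose (u - 2)
      = ((boxc A).powersetCard (u - 2)).card := (Finset.card_powersetCard _ _).symm
    _ = Nat.card {S // S ∈ (boxc A).powersetCard (u - 2)} := by
        rw [Nat.card_eq_fintype_card, Fintype.card_coe]
    _ ≤ Nat.card (Cset n u) := Nat.card_le_card_of_injective F hFinj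
    _ = numChains n n u := rfl

end lower

lemma basel_tail (A : ℕ) : ∑ d ∈ Finset.Icc 2 A, (1 : ℝ) / (d : ℝ) ^ 2 ≤ 3 / 4 := by
  rcases le_or_gt A 1 with hA | hA
  · rw [Finset.Icc_eq_empty (by omega)]
    norm_num
  · have key : ∀ B : ℕ, 2 ≤ B → ∑ d ∈ Finset.Icc 2 B, (1 : ℝ) / (d : ℝ) ^ 2 ≤ 3 / 4 - 1 / B := by
      intro B hB
      induction B, hB using Nat.le_induction with
      | base => norm_num
      | succ B hB ih =>
        rw [Finset.sum_Icc_succ_top (by omega)]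
        have hB0 : (0 : ℝ) < B := by positivity
        have hB1 : (0 : ℝ) < (B : ℝ) + 1 := by positivity
        have : (1 : ℝ) / ((B + 1 : ℕ) : ℝ) ^ 2 ≤ 1 / (B : ℝ) - 1 / ((B : ℝ) + 1) := by
          push_cast
          rw [div_sub_div _ _ (ne_of_gt hB0) (ne_of_gt hB1)]
          rw [div_le_div_iff₀ (by positivity) (by positivity)]
          ring_nf
          nlinarith [sq_nonneg ((B : ℝ))]
        push_cast at this ⊢
        linarith
    have := key A (by omega)
    have hA0 : (0 : ℝ) < A := by positivity
    have : (0:ℝ) < 1 / (A:ℝ) := by positivity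
    linarith [key A (by omega)]

lemma boxc_card_lb (A : ℕ) : (A : ℝ) ^ 2 / 4 ≤ ((boxc A).card : ℝ) := by
  classical
  set P : Finset (ℕ × ℕ) := Finset.Ioc 0 A ×ˢ Finset.Ioc 0 A with hP
  have hcardP : P.card = A ^ 2 := by
    rw [hP, Finset.card_product, Nat.card_Ioc]
    simp [sq]
  have hsplit : (P.filter (fun x => Nat.gcd x.1 x.2 = 1)).card
      + (P.filter (fun x => ¬ Nat.gcd x.1 x.2 = 1)).card = P.card :=
    Finset.card_filter_add_card_filter_not _
  have hsub : P.filter (fun x => ¬ Nat.gcd x.1 x.2 = 1)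
      ⊆ (Finset.Icc 2 A).biUnion (fun d => P.filter (fun p => d ∣ p.1 ∧ d ∣ p.2)) := by
    intro p hp
    rw [Finset.mem_filter] at hp
    obtain ⟨hpP, hpg⟩ := hp
    have hpP' := hpP
    rw [hP, Finset.mem_product, Finset.mem_Ioc, Finset.mem_Ioc] at hpP'
    set g := Nat.gcd p.1 p.2 with hg
    have hgpos : 0 < g := Nat.gcd_pos_of_pos_left _ hpP'.1.1
    have hgle : g ≤ A := le_trans (Nat.le_of_dvd hpP'.1.1 (Nat.gcd_dvd_left _ _)) hpP'.1.2
    rw [Finset.mem_biUnion]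
    exact ⟨g, Finset.mem_Icc.mpr ⟨by omega, hgle⟩,
      Finset.mem_filter.mpr ⟨hpP, Nat.gcd_dvd_left _ _, Nat.gcd_dvd_right _ _⟩⟩
  have hcount : ∀ d : ℕ, (P.filter fun p => d ∣ p.1 ∧ d ∣ p.2).card = (A / d) ^ 2 := by
    intro d
    rw [hP, Finset.filter_product, Finset.card_product,
      Nat.Ioc_filter_dvd_card_eq_div, sq]
  have hnc : (P.filter (fun x => ¬ Nat.gcd x.1 x.2 = 1)).card
      ≤ ∑ d ∈ Finset.Icc 2 A, (A / d) ^ 2 := by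
    calc (P.filter (fun x => ¬ Nat.gcd x.1 x.2 = 1)).card
        ≤ ((Finset.Icc 2 A).biUnion (fun d => P.filter (fun p => d ∣ p.1 ∧ d ∣ p.2))).card :=
          Finset.card_le_card hsub
      _ ≤ ∑ d ∈ Finset.Icc 2 A, (P.filter (fun p => d ∣ p.1 ∧ d ∣ p.2)).card :=
          Finset.card_biUnion_le
      _ = ∑ d ∈ Finset.Icc 2 A, (A / d) ^ 2 := Finset.sum_congr rfl fun d _ => hcount d
  have hncR : ((P.filter (fun x => ¬ Nat.gcd x.1 x.2 = 1)).card : ℝ)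
      ≤ 3 / 4 * (A : ℝ) ^ 2 := by
    calc ((P.filter (fun x => ¬ Nat.gcd x.1 x.2 = 1)).card : ℝ)
        ≤ ((∑ d ∈ Finset.Icc 2 A, (A / d) ^ 2 : ℕ) : ℝ) := by exact_mod_cast hnc
      _ = ∑ d ∈ Finset.Icc 2 A, (((A / d : ℕ) : ℝ)) ^ 2 := by push_cast; rfl
      _ ≤ ∑ d ∈ Finset.Icc 2 A, (A : ℝ) ^ 2 * (1 / (d : ℝ) ^ 2) := by
          apply Finset.sum_le_sum
          intro d hd
          have hd2 : 2 ≤ d := (Finset.mem_Icc.mp hd).1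
          have hd0 : (0 : ℝ) < d := by positivity
          have h1 : ((A / d : ℕ) : ℝ) ≤ (A : ℝ) / (d : ℝ) :=
            Nat.cast_div_le
          have h2 : (0:ℝ) ≤ ((A / d : ℕ) : ℝ) := Nat.cast_nonneg _
          calc (((A / d : ℕ) : ℝ)) ^ 2 ≤ ((A : ℝ) / (d : ℝ)) ^ 2 := by
                apply pow_le_pow_left₀ h2 h1
            _ = (A : ℝ) ^ 2 * (1 / (d : ℝ) ^ 2) := by
                field_simp
      _ = (A : ℝ) ^ 2 * ∑ d ∈ Finset.Icc 2 A, (1 / (d : ℝ) ^ 2) := by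
          rw [Finset.mul_sum]
      _ ≤ (A : ℝ) ^ 2 * (3 / 4) := by
          apply mul_le_mul_of_nonneg_left (basel_tail A) (by positivity)
      _ = 3 / 4 * (A : ℝ) ^ 2 := by ring
  have hbc : (boxc A).card = (P.filter (fun x => Nat.gcd x.1 x.2 = 1)).card := by
    rw [boxc, Finset.card_subtype]
  have : ((P.filter (fun x => Nat.gcd x.1 x.2 = 1)).card : ℝ)
      = (A : ℝ) ^ 2 - ((P.filter (fun x => ¬ Nat.gcd x.1 x.2 = 1)).card : ℝ) := by
    have := hsplit
    rw [hcardP] at this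
    have : ((P.filter (fun x => Nat.gcd x.1 x.2 = 1)).card : ℝ)
        + ((P.filter (fun x => ¬ Nat.gcd x.1 x.2 = 1)).card : ℝ) = ((A:ℝ)) ^ 2 := by
      exact_mod_cast congrArg (Nat.cast : ℕ → ℝ) this
    linarith
  rw [hbc, this]
  linarith

lemma pow_le_exp_mul_factorial : ∀ u : ℕ, (u : ℝ) ^ u ≤ Real.exp u * u.factorial := by
  intro u
  induction u with
  | zero => simp
  | succ u ih =>
    have h1 : ((u : ℝ) + 1) ^ u ≤ Real.exp 1 * (u : ℝ) ^ u := by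
      rcases Nat.eq_zero_or_pos u with rfl | hu
      · simp only [Nat.cast_zero, pow_zero, zero_add, one_pow]
        nlinarith [Real.exp_one_gt_d9]
      · have hu0 : (0 : ℝ) < u := by positivity
        have : ((u : ℝ) + 1) ^ u = ((1 + 1 / (u : ℝ)) * (u : ℝ)) ^ u := by
          congr 1
          field_simp
        rw [this, mul_pow]
        have hle : (1 + 1 / (u : ℝ)) ^ u ≤ Real.exp 1 := by
          have h := Real.add_one_le_exp (1 / (u : ℝ))
          calc (1 + 1 / (u : ℝ)) ^ u ≤ (Real.exp (1 / (u : ℝ))) ^ u := by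
                apply pow_le_pow_left₀ (by positivity) (by linarith)
            _ = Real.exp ((1 / (u : ℝ)) * u) := by
                rw [← Real.exp_nat_mul]; ring_nf
            _ = Real.exp 1 := by
                congr 1
                field_simp
        exact mul_le_mul_of_nonneg_right hle (by positivity)
    calc ((u + 1 : ℕ) : ℝ) ^ (u + 1) = ((u : ℝ) + 1) * ((u : ℝ) + 1) ^ u := by
          push_cast; ring
      _ ≤ ((u : ℝ) + 1) * (Real.exp 1 * (u : ℝ) ^ u) := by
          apply mul_le_mul_of_nonneg_left h1 (by positivity)
      _ ≤ ((u : ℝ) + 1) * (Real.exp 1 * (Real.exp u * u.factorial)) := by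
          apply mul_le_mul_of_nonneg_left _ (by positivity)
          apply mul_le_mul_of_nonneg_left ih (by positivity)
      _ = Real.exp (u + 1) * ((u + 1 : ℕ) * u.factorial) := by
          rw [Real.exp_add]; push_cast; ring
      _ = Real.exp (u + 1) * ((u + 1 : ℕ).factorial) := by
          rw [Nat.factorial_succ]; push_cast; ring
      _ = Real.exp ((u + 1 : ℕ) : ℝ) * ((u + 1 : ℕ).factorial) := by push_cast; ring

lemma log_factorial_ge (u : ℕ) : (u : ℝ) * Real.log u - u ≤ Real.log u.factorial := by
  rcases Nat.eq_zero_or_pos u with rfl | hu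
  · simp
  have h := pow_le_exp_mul_factorial u
  have h1 : Real.log ((u : ℝ) ^ u) ≤ Real.log (Real.exp u * u.factorial) :=
    Real.log_le_log (by positivity) h
  rw [Real.log_pow, Real.log_mul (by positivity) (by positivity), Real.log_exp] at h1
  linarith

lemma log_nat_le {a b : ℕ} (h : a ≤ b) : Real.log a ≤ Real.log b := by
  rcases Nat.eq_zero_or_pos a with rfl | ha
  · simp [Real.log_nonneg]
    rcases Nat.eq_zero_or_pos b with rfl | hb
    · simp
    · exact Real.log_nonneg (by exact_mod_cast hb)
  · exact Real.log_le_log (by positivity) (by exact_mod_cast h)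

lemma upper_real (n u : ℕ) (hu : 2 ≤ u) (hn : 2 ≤ n) (hun : (u:ℝ) ≤ (n:ℝ))
    (hN : 1 ≤ numChains n n u) :
    Real.log (numChains n n u) ≤ (u:ℝ) * (2*Real.log n - 3*Real.log u) + 5*(u:ℝ) := by
  have hNat : (u.factorial) ^ 3 * numChains n n u ≤ (n + u) ^ (2 * u) := by
    calc (u.factorial) ^ 3 * numChains n n u
        = (u.factorial) ^ 2 * (u.factorial * numChains n n u) := by ring
      _ ≤ (u.factorial) ^ 2 * ((n + u).choose u) ^ 2 :=
          Nat.mul_le_mul_left _ (upper_nat n u)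
      _ = (u.factorial * (n + u).choose u) ^ 2 := by ring
      _ = ((n + u).descFactorial u) ^ 2 := by
          rw [Nat.descFactorial_eq_factorial_mul_choose]
      _ ≤ ((n + u) ^ u) ^ 2 :=
          Nat.pow_le_pow_left (Nat.descFactorial_le_pow _ _) 2
      _ = (n + u) ^ (2 * u) := by rw [← pow_mul, Nat.mul_comm]
  have hfac : (0:ℝ) < (u.factorial : ℝ) := by exact_mod_cast u.factorial_pos
  have hNR : (numChains n n u : ℝ) ≤ ((n:ℝ) + u) ^ (2*u) / (u.factorial : ℝ) ^ 3 := by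
    rw [le_div_iff₀ (by positivity)]
    have := hNat
    have hcast : ((u.factorial) ^ 3 * numChains n n u : ℕ) ≤ ((n + u) ^ (2 * u) : ℕ) := hNat
    calc (numChains n n u : ℝ) * (u.factorial : ℝ) ^ 3
        = (((u.factorial) ^ 3 * numChains n n u : ℕ) : ℝ) := by push_cast; ring
      _ ≤ (((n + u) ^ (2 * u) : ℕ) : ℝ) := by exact_mod_cast hcast
      _ = ((n:ℝ) + u) ^ (2*u) := by push_cast; ring
  have hNpos : (0:ℝ) < (numChains n n u : ℝ) := by exact_mod_cast hN
  have hlog : Real.log (numChains n n u)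
      ≤ 2*(u:ℝ) * Real.log ((n:ℝ) + u) - 3 * Real.log (u.factorial) := by
    calc Real.log (numChains n n u) ≤ Real.log (((n:ℝ) + u) ^ (2*u) / (u.factorial : ℝ) ^ 3) :=
          Real.log_le_log hNpos hNR
      _ = (2*u) * Real.log ((n:ℝ) + u) - 3 * Real.log (u.factorial) := by
          rw [Real.log_div (by positivity) (by positivity), Real.log_pow, Real.log_pow]
          push_cast; ring
      _ = 2*(u:ℝ) * Real.log ((n:ℝ) + u) - 3 * Real.log (u.factorial) := by ring
  have h2n : Real.log ((n:ℝ) + u) ≤ Real.log 2 + Real.log n := by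
    rw [← Real.log_mul (by norm_num) (by positivity)]
    apply Real.log_le_log (by positivity)
    linarith
  have hfl := log_factorial_ge u
  have hlog2 : Real.log 2 ≤ 1 := by
    have := Real.log_two_lt_d9
    linarith
  have hu0 : (0:ℝ) ≤ (u:ℝ) := by positivity
  have hlu : 0 ≤ Real.log u := Real.log_nonneg (by exact_mod_cast Nat.one_le_iff_ne_zero.mpr (by omega))
  nlinarith [mul_le_mul_of_nonneg_left h2n (by positivity : (0:ℝ) ≤ 2*(u:ℝ)),
    mul_le_mul_of_nonneg_left hlog2 (by positivity : (0:ℝ) ≤ 2*(u:ℝ))]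

lemma lower_real (n u : ℕ) (hu : 2 ≤ u) (hn : 2 ≤ n)
    (h4 : 4 * (u:ℝ) ≤ (n:ℝ)) (h128 : 128 * (u:ℝ)^3 ≤ (n:ℝ)^2) :
    1 ≤ numChains n n u ∧
    (u:ℝ) * (2 * Real.log n - 3 * Real.log u) - 5*(u:ℝ) - 4 * Real.log n
      ≤ Real.log (numChains n n u) := by
  have hu0 : (0:ℝ) < (u:ℝ) := by positivity
  have hn0 : (0:ℝ) < (n:ℝ) := by positivity
  set A := n / (2*u) with hA
  set M := (boxc A).card with hM
  have h2un : 2*u ≤ n := by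
    have : (2*u : ℕ) ≤ (n:ℕ) := by exact_mod_cast (by push_cast; linarith : ((2*u:ℕ):ℝ) ≤ (n:ℝ))
    exact this
  have hA1 : 1 ≤ A := (Nat.one_le_div_iff (by omega)).mpr h2un
  have huA : u * A ≤ n - 1 := by
    have h1 : A * (2*u) ≤ n := Nat.div_mul_le_self n (2*u)
    have h2 : u * A ≤ n / 2 := by
      rw [Nat.le_div_iff_mul_le (by omega)]
      calc u * A * 2 = A * (2*u) := by ring
        _ ≤ n := h1
    omega
  have hchoose : M.choose (u - 2) ≤ numChains n n u := lower_nat hu huA (by omega)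
  -- A ≥ n/(4u)
  have hAn : n ≤ 4 * u * A := by
    have hmod := Nat.div_add_mod n (2*u)
    have hlt : n % (2*u) < 2*u := Nat.mod_lt n (by omega)
    calc n = 2*u*A + n % (2*u) := by rw [hA]; omega
      _ ≤ 2*u*A + 2*u := by omega
      _ ≤ 2*u*A + 2*u*A := by
          have : 2*u ≤ 2*u*A := Nat.le_mul_of_pos_right _ (by omega)
          omega
      _ = 4*u*A := by ring
  have hAreal : (n:ℝ) / (4*(u:ℝ)) ≤ (A:ℝ) := by
    rw [div_le_iff₀ (by positivity)]
    calc (n:ℝ) ≤ ((4*u*A : ℕ) : ℝ) := by exact_mod_cast hAn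
      _ = (A:ℝ) * (4*(u:ℝ)) := by push_cast; ring
  have hMlb : (n:ℝ)^2 / (64*(u:ℝ)^2) ≤ (M:ℝ) := by
    have h1 : ((n:ℝ)/(4*(u:ℝ)))^2 ≤ (A:ℝ)^2 :=
      pow_le_pow_left₀ (by positivity) hAreal 2
    have h2 := boxc_card_lb A
    have : (n:ℝ)^2 / (64*(u:ℝ)^2) = ((n:ℝ)/(4*(u:ℝ)))^2 / 4 := by
      field_simp; ring
    rw [this]
    linarith
  have hM2u : 2*u ≤ M := by
    have : ((2*u:ℕ):ℝ) ≤ (M:ℝ) := by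
      push_cast
      have h' : (n:ℝ)^2 ≤ (M:ℝ) * (64*(u:ℝ)^2) := (div_le_iff₀ (by positivity)).mp hMlb
      nlinarith [h', h128, mul_pos hu0 hu0, sq_nonneg ((u:ℝ))]
    exact_mod_cast this
  set W := M - u with hW
  have hWu : u ≤ W := by omega
  have hWreal : (n:ℝ)^2 / (128*(u:ℝ)^2) ≤ (W:ℝ) := by
    have hcast : (W:ℝ) = (M:ℝ) - (u:ℝ) := by
      rw [hW]; push_cast [Nat.cast_sub (by omega : u ≤ M)]; ring
    have hu128 : (u:ℝ) ≤ (n:ℝ)^2 / (128*(u:ℝ)^2) := by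
      rw [le_div_iff₀ (by positivity)]
      nlinarith
    have : (n:ℝ)^2 / (128*(u:ℝ)^2) = (n:ℝ)^2 / (64*(u:ℝ)^2) - (n:ℝ)^2 / (128*(u:ℝ)^2) := by
      field_simp; ring
    rw [hcast]
    linarith
  -- nat chain
  have hNat : W ^ (u-2) ≤ u ^ u * numChains n n u := by
    calc W ^ (u-2) ≤ (M + 1 - (u-2)) ^ (u-2) :=
          Nat.pow_le_pow_left (by omega) _
      _ ≤ M.descFactorial (u-2) := Nat.pow_sub_le_descFactorial _ _
      _ = (u-2).factorial * M.choose (u-2) := Nat.descFactorial_eq_factorial_mul_choose _ _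
      _ ≤ u ^ u * M.choose (u-2) := by
          apply Nat.mul_le_mul_right
          calc (u-2).factorial ≤ u.factorial := Nat.factorial_le (by omega)
            _ ≤ u ^ u := Nat.factorial_le_pow _
      _ ≤ u ^ u * numChains n n u := Nat.mul_le_mul_left _ hchoose
  have hN1 : 1 ≤ numChains n n u := by
    have hWpos : 1 ≤ W ^ (u-2) := Nat.one_le_pow _ _ (by omega)
    rcases Nat.eq_zero_or_pos (numChains n n u) with h | h
    · rw [h, Nat.mul_zero] at hNat
      omega
    · exact h
  refine ⟨hN1, ?_⟩
  have hNpos : (0:ℝ) < (numChains n n u : ℝ) := by exact_mod_cast hN1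
  have hWpos : (0:ℝ) < (W:ℝ) := by
    have : 1 ≤ W := by omega
    exact_mod_cast this
  have hlogstep : ((u:ℝ) - 2) * Real.log W ≤ (u:ℝ) * Real.log u + Real.log (numChains n n u) := by
    have hcastNat : ((W:ℝ)) ^ (u-2) ≤ ((u:ℝ)) ^ u * (numChains n n u : ℝ) := by
      calc ((W:ℝ)) ^ (u-2) = ((W ^ (u-2) : ℕ) : ℝ) := by push_cast; ring
        _ ≤ ((u ^ u * numChains n n u : ℕ) : ℝ) := by exact_mod_cast hNat
        _ = ((u:ℝ)) ^ u * (numChains n n u : ℝ) := by push_cast; ring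
    have := Real.log_le_log (by positivity) hcastNat
    rw [Real.log_pow, Real.log_mul (by positivity) (ne_of_gt hNpos), Real.log_pow] at this
    have hcast2 : (((u:ℕ) - 2 : ℕ) : ℝ) = (u:ℝ) - 2 := by
      push_cast [Nat.cast_sub hu]; ring
    rw [hcast2] at this
    linarith
  have hlogW : 2 * Real.log n - 2 * Real.log u - Real.log 128 ≤ Real.log W := by
    have h1 : Real.log ((n:ℝ)^2 / (128*(u:ℝ)^2)) ≤ Real.log W :=
      Real.log_le_log (by positivity) hWreal
    rw [Real.log_div (by positivity) (by positivity), Real.log_mul (by norm_num) (by positivity),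
      Real.log_pow, Real.log_pow] at h1
    push_cast at h1
    linarith
  have hlog128 : Real.log 128 ≤ 5 := by
    have h2 : (128:ℝ) = 2^7 := by norm_num
    rw [h2, Real.log_pow]
    have := Real.log_two_lt_d9
    push_cast
    linarith
  have hlu : 0 ≤ Real.log u := Real.log_nonneg (by exact_mod_cast Nat.one_le_iff_ne_zero.mpr (by omega))
  have hln : 0 ≤ Real.log n := Real.log_nonneg (by exact_mod_cast Nat.one_le_iff_ne_zero.mpr (by omega : (n:ℕ) ≠ 0))
  have hu2 : (2:ℝ) ≤ (u:ℝ) := by exact_mod_cast hu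
  have hfinal : (u:ℝ) * (2 * Real.log n - 3 * Real.log u) - 5*(u:ℝ) - 4 * Real.log n
      ≤ ((u:ℝ) - 2) * (2 * Real.log n - 2 * Real.log u - Real.log 128) - (u:ℝ) * Real.log u := by
    have key : 0 ≤ (u:ℝ) * (5 - Real.log 128) := mul_nonneg (by positivity) (by linarith)
    have expand : ((u:ℝ) - 2) * (2 * Real.log n - 2 * Real.log u - Real.log 128)
        - (u:ℝ) * Real.log u
        - ((u:ℝ) * (2 * Real.log n - 3 * Real.log u) - 5*(u:ℝ) - 4 * Real.log n)
        = (u:ℝ)*(5 - Real.log 128) + 4*Real.log u + 2*Real.log 128 := by ring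
    have hl128 : 0 ≤ Real.log 128 := Real.log_nonneg (by norm_num)
    linarith
  have hmono : ((u:ℝ) - 2) * (2 * Real.log n - 2 * Real.log u - Real.log 128)
      ≤ ((u:ℝ) - 2) * Real.log W :=
    mul_le_mul_of_nonneg_left hlogW (by linarith)
  linarith


/-- If `u_n → ∞` and `u_n = o(n^{2/3})`, then
`ln 𝒩(n,n,u_n) = (1 + o(1))·u_n·ln(n²/u_n³)`, i.e. `𝒩(n,n,u_n) = (n²/u_n³)^{u_n(1+o(1))}`. -/
theorem statement8 (u : ℕ → ℕ) (hpos : ∀ n, 0 < u n)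
    (hinf : Tendsto u atTop atTop)
    (ho : (fun n : ℕ => (u n : ℝ)) =o[atTop] fun n : ℕ => (n : ℝ) ^ ((2:ℝ)/3)) :
    (fun n : ℕ => Real.log (numChains n n (u n)))
      ~[atTop] (fun n : ℕ => (u n : ℝ) * Real.log ((n : ℝ) ^ 2 / (u n : ℝ) ^ 3)) := by
  classical
  set f : ℕ → ℝ := fun n => Real.log (numChains n n (u n)) with hf
  set L : ℕ → ℝ := fun n => Real.log ((n : ℝ) ^ 2 / (u n : ℝ) ^ 3) with hLdef
  set g : ℕ → ℝ := fun n => (u n : ℝ) * L n with hg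
  -- basic eventual facts
  have hUinf : Tendsto (fun n => (u n : ℝ)) atTop atTop :=
    tendsto_natCast_atTop_atTop.comp hinf
  have hu2 : ∀ᶠ n : ℕ in atTop, 2 ≤ u n := hinf.eventually_ge_atTop 2
  have hn2 : ∀ᶠ n : ℕ in atTop, 2 ≤ n := eventually_ge_atTop 2
  -- smallness from ho
  have hbound6 : ∀ᶠ n : ℕ in atTop, (u n : ℝ) ≤ (1/6) * (n : ℝ) ^ ((2:ℝ)/3) := by
    have := ho.def (by norm_num : (0:ℝ) < 1/6)
    filter_upwards [this] with n hn
    rw [Real.norm_eq_abs, Real.norm_eq_abs, abs_of_nonneg (by positivity),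
      abs_of_nonneg (by positivity)] at hn
    exact hn
  have hrpow_le : ∀ᶠ n : ℕ in atTop, ((n:ℝ)) ^ ((2:ℝ)/3) ≤ (n:ℝ) := by
    filter_upwards [eventually_ge_atTop 1] with n hn
    have h1 : (1:ℝ) ≤ (n:ℝ) := by exact_mod_cast hn
    calc ((n:ℝ)) ^ ((2:ℝ)/3) ≤ ((n:ℝ)) ^ ((1:ℝ)) :=
          Real.rpow_le_rpow_of_exponent_le h1 (by norm_num)
      _ = (n:ℝ) := Real.rpow_one _
  have h4u : ∀ᶠ n : ℕ in atTop, 4 * (u n : ℝ) ≤ (n : ℝ) := by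
    filter_upwards [hbound6, hrpow_le] with n h1 h2
    nlinarith [Real.rpow_nonneg (by positivity : (0:ℝ) ≤ (n:ℝ)) ((2:ℝ)/3)]
  have h128 : ∀ᶠ n : ℕ in atTop, 128 * (u n : ℝ)^3 ≤ (n : ℝ)^2 := by
    filter_upwards [hbound6, eventually_ge_atTop 1] with n h1 hn1
    have hn0 : (0:ℝ) ≤ (n:ℝ) := by positivity
    have hcube : (((n:ℝ)) ^ ((2:ℝ)/3)) ^ (3:ℕ) = (n:ℝ) ^ (2:ℕ) := by
      rw [← Real.rpow_natCast (((n:ℝ)) ^ ((2:ℝ)/3)) 3, ← Real.rpow_mul hn0]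
      norm_num
    have hu0 : (0:ℝ) ≤ (u n : ℝ) := by positivity
    have h3 : (u n : ℝ)^3 ≤ ((1/6) * ((n:ℝ)) ^ ((2:ℝ)/3))^3 := by
      apply pow_le_pow_left₀ hu0 h1
    have : ((1/6) * ((n:ℝ)) ^ ((2:ℝ)/3))^3 = (1/216) * (n:ℝ)^(2:ℕ) := by
      rw [mul_pow, hcube]; norm_num
    rw [this] at h3
    have : (n:ℝ)^(2:ℕ) = (n:ℝ)^2 := by norm_num
    nlinarith
  -- L tends to infinity
  have hLinf : Tendsto L atTop atTop := by
    have hr : Tendsto (fun n : ℕ => (u n : ℝ) / (n:ℝ) ^ ((2:ℝ)/3)) atTop (𝓝 0) :=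
      ho.tendsto_div_nhds_zero
    have hrpos : ∀ᶠ n : ℕ in atTop, 0 < (u n : ℝ) / (n:ℝ) ^ ((2:ℝ)/3) := by
      filter_upwards [eventually_ge_atTop 1] with n hn
      have hn0 : (0:ℝ) < (n:ℝ) := by
        have : (1:ℕ) ≤ n := hn
        exact_mod_cast Nat.lt_of_lt_of_le Nat.zero_lt_one this
      exact div_pos (by exact_mod_cast hpos n) (by positivity)
    have hinv : Tendsto (fun n : ℕ => ((u n : ℝ) / (n:ℝ) ^ ((2:ℝ)/3))⁻¹) atTop atTop :=
      tendsto_inv_nhdsGT_zero.comp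
        (tendsto_nhdsWithin_of_tendsto_nhds_of_eventually_within _ hr hrpos)
    have hpow : Tendsto (fun n : ℕ => (((u n : ℝ) / (n:ℝ) ^ ((2:ℝ)/3))⁻¹)^(3:ℕ)) atTop atTop :=
      (tendsto_pow_atTop (by norm_num : (3:ℕ) ≠ 0)).comp hinv
    have heq : ∀ᶠ n : ℕ in atTop,
        (((u n : ℝ) / (n:ℝ) ^ ((2:ℝ)/3))⁻¹)^(3:ℕ) = (n : ℝ) ^ 2 / (u n : ℝ) ^ 3 := by
      filter_upwards [eventually_ge_atTop 1] with n hn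
      have hn0 : (0:ℝ) < (n:ℝ) := by
        have : (1:ℕ) ≤ n := hn
        exact_mod_cast Nat.lt_of_lt_of_le Nat.zero_lt_one this
      have hu0 : (0:ℝ) < (u n : ℝ) := by exact_mod_cast hpos n
      have hcube : (((n:ℝ)) ^ ((2:ℝ)/3)) ^ (3:ℕ) = (n:ℝ) ^ (2:ℕ) := by
        rw [← Real.rpow_natCast (((n:ℝ)) ^ ((2:ℝ)/3)) 3, ← Real.rpow_mul hn0.le]
        norm_num
      rw [inv_div, div_pow, hcube]
    exact Real.tendsto_log_atTop.comp (hpow.congr' heq)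
  -- identity for L
  have hLeq : ∀ᶠ n : ℕ in atTop, L n = 2*Real.log n - 3*Real.log (u n) := by
    filter_upwards [eventually_ge_atTop 1] with n hn
    have hn0 : (0:ℝ) < (n:ℝ) := by
      have : (1:ℕ) ≤ n := hn
      exact_mod_cast Nat.lt_of_lt_of_le Nat.zero_lt_one this
    have hu0 : (0:ℝ) < (u n : ℝ) := by exact_mod_cast hpos n
    show Real.log ((n : ℝ) ^ 2 / (u n : ℝ) ^ 3) = _
    rw [Real.log_div (by positivity) (by positivity), Real.log_pow, Real.log_pow]
    push_cast; ring
  have hL1 : ∀ᶠ n : ℕ in atTop, 1 ≤ L n := hLinf.eventually_ge_atTop 1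
  -- pointwise bounds
  have hbounds : ∀ᶠ n : ℕ in atTop,
      g n - 5*(u n : ℝ) - 4*Real.log n ≤ f n ∧ f n ≤ g n + 5*(u n : ℝ) := by
    filter_upwards [hu2, hn2, h4u, h128, hLeq] with n h1 h2 h3 h4 h5
    obtain ⟨hN1, hlow⟩ := lower_real n (u n) h1 h2 h3 h4
    have hun : (u n : ℝ) ≤ (n:ℝ) := by
      have : (0:ℝ) ≤ (u n : ℝ) := by positivity
      linarith
    have hup := upper_real n (u n) h1 h2 hun hN1
    have hgn : g n = (u n : ℝ) * (2*Real.log n - 3*Real.log (u n)) := by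
      rw [hg]; simp only []; rw [h5]
    constructor
    · rw [hgn]; exact le_trans (by linarith) hlow
    · rw [hgn]; exact le_trans hup (by linarith)
  -- ratio bounds
  have hratio : Tendsto (fun n => f n / g n) atTop (𝓝 1) := by
    have hupper2 : ∀ᶠ n : ℕ in atTop, f n / g n ≤ 1 + 5 / L n := by
      filter_upwards [hbounds, hL1, hu2] with n hb hL hu
      have hu0 : (0:ℝ) < (u n : ℝ) := by exact_mod_cast hpos n
      have hL0 : (0:ℝ) < L n := by linarith
      have hg0 : (0:ℝ) < g n := mul_pos hu0 hL0
      rw [div_le_iff₀ hg0]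
      have hexp : (1 + 5 / L n) * g n = g n + 5 * ((u n : ℝ) * L n) / L n := by
        rw [hg]; field_simp
      rw [hexp]
      have : 5 * ((u n : ℝ) * L n) / L n = 5 * (u n : ℝ) := by
        field_simp
      rw [this]
      exact hb.2
    have hlower2 : ∀ᶠ n : ℕ in atTop,
        1 - 5 / L n - (2/(u n : ℝ) + 6*Real.log (u n)/(u n : ℝ)) ≤ f n / g n := by
      filter_upwards [hbounds, hL1, hu2, hLeq, eventually_ge_atTop 1] with n hb hL hu h5 hn1
      have hu0 : (0:ℝ) < (u n : ℝ) := by exact_mod_cast hpos n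
      have hL0 : (0:ℝ) < L n := by linarith
      have hg0 : (0:ℝ) < g n := mul_pos hu0 hL0
      have hlu : 0 ≤ Real.log (u n) :=
        Real.log_nonneg (by exact_mod_cast Nat.one_le_iff_ne_zero.mpr (by omega))
      rw [le_div_iff₀ hg0]
      have hgval : g n = (u n : ℝ) * L n := rfl
      have hexp : (1 - 5 / L n - (2/(u n : ℝ) + 6*Real.log (u n)/(u n : ℝ))) * ((u n : ℝ) * L n)
          = (u n : ℝ) * L n - 5*(u n : ℝ) - 2*L n - 6*Real.log (u n) * L n := by
        field_simp
        ring
      rw [hgval, hexp]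
      have hln : 4 * Real.log n = 2 * L n + 6 * Real.log (u n) := by
        rw [h5]; ring
      have hmul : 6 * Real.log (u n) ≤ 6 * Real.log (u n) * L n := by
        nlinarith
      have := hb.1
      rw [hgval] at this
      linarith
    have h5L : Tendsto (fun n : ℕ => 5 / L n) atTop (𝓝 0) :=
      tendsto_const_nhds.div_atTop hLinf
    have h2u : Tendsto (fun n : ℕ => 2 / (u n : ℝ)) atTop (𝓝 0) :=
      tendsto_const_nhds.div_atTop hUinf
    have hlogu : Tendsto (fun n : ℕ => 6*Real.log (u n)/(u n : ℝ)) atTop (𝓝 0) := by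
      have h0 : Tendsto (fun x : ℝ => Real.log x / x) atTop (𝓝 0) :=
        Real.isLittleO_log_id_atTop.tendsto_div_nhds_zero
      have h1 := (h0.comp hUinf).const_mul (6:ℝ)
      simp only [Function.comp_def, mul_zero] at h1
      refine h1.congr fun n => ?_
      simp [mul_div_assoc]
    have hub : Tendsto (fun n : ℕ => 1 + 5 / L n) atTop (𝓝 1) := by
      have := (tendsto_const_nhds : Tendsto (fun _ : ℕ => (1:ℝ)) atTop (𝓝 1)).add h5L
      simpa using this
    have hlb : Tendsto (fun n : ℕ =>
        1 - 5 / L n - (2/(u n : ℝ) + 6*Real.log (u n)/(u n : ℝ))) atTop (𝓝 1) := by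
      have := ((tendsto_const_nhds : Tendsto (fun _ : ℕ => (1:ℝ)) atTop (𝓝 1)).sub h5L).sub
        (h2u.add hlogu)
      simpa using this
    exact tendsto_of_tendsto_of_tendsto_of_le_of_le' hlb hub hlower2 hupper2
  have hgz : ∀ᶠ n : ℕ in atTop, g n ≠ 0 := by
    filter_upwards [hL1, hu2] with n hL hu
    have hu0 : (0:ℝ) < (u n : ℝ) := by exact_mod_cast hpos n
    exact ne_of_gt (mul_pos hu0 (by linarith))
  rw [Asymptotics.isEquivalent_iff_tendsto_one hgz]
  exact hratio
end

section
/- For every λ ∈ (0, 2], one has ∫_{(0,∞)²} λ t₁ e^{−(t₁+t₂)} / [(1 − e^{−(t₁+t₂)})(1 + (λ−1)e^{−(t₁+t₂)})] dt₁ dt₂ = ∑_{k≥1} (1 − (1−λ)^k)/k³ (= ζ(3) − Li₃(1−λ)), the integral being finite and the series convergent. -/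
/-!
With `x = exp (-(t₁ + t₂))` and `m = 1 - λ`, the partial fractions
`λx / ((1 - x)(1 - mx)) = 1/(1 - x) - 1/(1 - mx)` expand the integrand into the series
`∑_{k ≥ 1} (1 - mᵏ) t₁ e^{-k(t₁ + t₂)}` of nonnegative terms, and
`∫∫ t₁ e^{-k(t₁ + t₂)} = 1/k³`. Since `|m| ≤ 1`, the coefficients lie in `[0, 2]`, so the
integrals of the terms are summable, which justifies integrating term by term.
-/

open Real MeasureTheory Set

namespace MeasureTheory

variable {α E : Type*} [MeasurableSpace α] {μ : Measure α} [NormedAddCommGroup E]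

theorem integrable_of_hasSum_of_summable_integral_norm {F : ℕ → α → E} {f : α → E}
    (hF_int : ∀ k, Integrable (F k) μ) (hF_sum : Summable fun k ↦ ∫ a, ‖F k a‖ ∂μ)
    (hf : ∀ᵐ a ∂μ, HasSum (F · a) (f a)) :
    Integrable f μ := by
  have hmeas : AEStronglyMeasurable f μ :=
    aestronglyMeasurable_of_tendsto_ae Filter.atTop
      (fun n ↦ Finset.aestronglyMeasurable_fun_sum _ fun k _ ↦ (hF_int k).1)
      (hf.mono fun a ha ↦ ha.tendsto_sum_nat)
  refine ⟨hmeas, ?_⟩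
  rw [hasFiniteIntegral_iff_enorm]
  calc ∫⁻ a, ‖f a‖ₑ ∂μ ≤ ∫⁻ a, ∑' k, ‖F k a‖ₑ ∂μ :=
        lintegral_mono_ae <| hf.mono fun a ha ↦ ha.tsum_eq ▸ enorm_tsum_le_tsum_enorm
    _ = ∑' k, ENNReal.ofReal (∫ a, ‖F k a‖ ∂μ) := by
        rw [lintegral_tsum fun k ↦ (hF_int k).1.enorm]
        simp_rw [ofReal_integral_norm_eq_lintegral_enorm (hF_int _)]
    _ = ENNReal.ofReal (∑' k, ∫ a, ‖F k a‖ ∂μ) :=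
        (ENNReal.ofReal_tsum_of_nonneg (fun k ↦ integral_nonneg fun a ↦ norm_nonneg _) hF_sum).symm
    _ < ⊤ := ENNReal.ofReal_lt_top

theorem hasSum_integral_of_hasSum_of_summable_integral_norm [NormedSpace ℝ E]
    {F : ℕ → α → E} {f : α → E}
    (hF_int : ∀ k, Integrable (F k) μ) (hF_sum : Summable fun k ↦ ∫ a, ‖F k a‖ ∂μ)
    (hf : ∀ᵐ a ∂μ, HasSum (F · a) (f a)) :
    HasSum (fun k ↦ ∫ a, F k a ∂μ) (∫ a, f a ∂μ) := by
  rw [integral_congr_ae (hf.mono fun a ha ↦ ha.tsum_eq.symm)]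
  exact hasSum_integral_of_summable_integral_norm hF_int hF_sum

end MeasureTheory

theorem hasSum_one_sub_pow_mul_pow {𝕜 : Type*} [NormedField 𝕜] [CompleteSpace 𝕜] {m x : 𝕜}
    (hx : ‖x‖ < 1) (hmx : ‖m * x‖ < 1) :
    HasSum (fun k : ℕ ↦ (1 - m ^ k) * x ^ k) ((1 - x)⁻¹ - (1 - m * x)⁻¹) :=
  ((hasSum_geometric_of_norm_lt_one hx).sub (hasSum_geometric_of_norm_lt_one hmx)).congr_fun
    fun k ↦ by rw [mul_pow]; ring

theorem one_sub_pow_mem_Icc {m : ℝ} (hm : |m| ≤ 1) (n : ℕ) : 1 - m ^ n ∈ Icc (0 : ℝ) 2 := by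
  have h := abs_le.1 ((abs_pow m n).trans_le (pow_le_one₀ (abs_nonneg m) hm))
  constructor <;> linarith [h.1, h.2]

theorem summable_one_sub_pow_div_succ_pow_three {m : ℝ} (hm : |m| ≤ 1) :
    Summable fun k : ℕ ↦ (1 - m ^ (k + 1)) / ((k : ℝ) + 1) ^ 3 := by
  have hbase : Summable fun k : ℕ ↦ 2 / ((k : ℝ) + 1) ^ 3 := by
    simpa [div_eq_mul_inv] using
      ((summable_nat_add_iff 1).2 (summable_one_div_nat_pow.2 (by norm_num : 1 < 3))).mul_left 2
  refine hbase.of_nonneg_of_le (fun k ↦ ?_) fun k ↦ ?_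
  · exact div_nonneg (one_sub_pow_mem_Icc hm _).1 (by positivity)
  · exact div_le_div_of_nonneg_right (one_sub_pow_mem_Icc hm _).2 (by positivity)

theorem inv_one_sub_sub_inv_one_sub_mul {K : Type*} [Field K] {l x : K} (hx : 1 - x ≠ 0)
    (hlx : 1 + (l - 1) * x ≠ 0) :
    (1 - x)⁻¹ - (1 - (1 - l) * x)⁻¹ = l * x / ((1 - x) * (1 + (l - 1) * x)) := by
  rw [show 1 - (1 - l) * x = 1 + (l - 1) * x by ring, inv_sub_inv hx hlx]
  ring

theorem integral_mul_exp_neg_mul_Ioi {r : ℝ} (hr : 0 < r) :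
    ∫ x in Ioi (0 : ℝ), x * exp (-(r * x)) = 1 / r ^ 2 := by
  have h := integral_rpow_mul_exp_neg_mul_Ioi two_pos hr
  norm_num [Real.Gamma_two] at h
  rw [h, one_div]

theorem integral_exp_neg_mul_Ioi {r : ℝ} (hr : 0 < r) :
    ∫ x in Ioi (0 : ℝ), exp (-(r * x)) = 1 / r := by
  have h := integral_rpow_mul_exp_neg_mul_Ioi one_pos hr
  norm_num [Real.Gamma_one] at h
  simpa using h

theorem exp_neg_mul_add (r a b : ℝ) : exp (-(r * (a + b))) = exp (-(r * a)) * exp (-(r * b)) := by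
  rw [← exp_add]
  congr 1
  ring

theorem integrableOn_fst_mul_exp_neg_mul_add {r : ℝ} (hr : 0 < r) :
    IntegrableOn (fun t : ℝ × ℝ ↦ t.1 * exp (-(r * (t.1 + t.2)))) (Ioi 0 ×ˢ Ioi 0) := by
  simp_rw [exp_neg_mul_add, ← mul_assoc]
  rw [IntegrableOn, Measure.volume_eq_prod, ← Measure.prod_restrict]
  have h₁ : IntegrableOn (fun x : ℝ ↦ x * exp (-(r * x))) (Ioi 0) := by
    simpa only [rpow_one, neg_mul] using
      integrableOn_rpow_mul_exp_neg_mul_rpow (p := 1) (s := 1) (by norm_num) one_pos hr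
  have h₂ : IntegrableOn (fun x : ℝ ↦ exp (-(r * x))) (Ioi 0) := by
    simpa only [neg_mul] using exp_neg_integrableOn_Ioi 0 hr
  exact h₁.mul_prod h₂

theorem setIntegral_fst_mul_exp_neg_mul_add {r : ℝ} (hr : 0 < r) :
    ∫ t in Ioi (0 : ℝ) ×ˢ Ioi (0 : ℝ), t.1 * exp (-(r * (t.1 + t.2))) = 1 / r ^ 3 := by
  simp_rw [exp_neg_mul_add, ← mul_assoc]
  rw [Measure.volume_eq_prod, setIntegral_prod_mul (fun x ↦ x * exp (-(r * x)))
    (fun x ↦ exp (-(r * x))), integral_mul_exp_neg_mul_Ioi hr, integral_exp_neg_mul_Ioi hr]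
  field_simp

theorem hasSum_one_sub_pow_mul_fst_mul_exp_neg {l : ℝ} (hm : |1 - l| ≤ 1) {t : ℝ × ℝ}
    (ht : t ∈ Ioi (0 : ℝ) ×ˢ Ioi (0 : ℝ)) :
    HasSum (fun k : ℕ ↦ (1 - (1 - l) ^ (k + 1)) * (t.1 * exp (-(((k : ℝ) + 1) * (t.1 + t.2)))))
      (l * t.1 * exp (-(t.1 + t.2)) /
        ((1 - exp (-(t.1 + t.2))) * (1 + (l - 1) * exp (-(t.1 + t.2))))) := by
  set x := exp (-(t.1 + t.2))
  have hx₀ : 0 < x := exp_pos _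
  have hx₁ : x < 1 := exp_lt_one_iff.2 (by linarith [ht.1.out, ht.2.out])
  have hmx : |(1 - l) * x| < 1 := by
    rw [abs_mul, abs_of_pos hx₀]
    nlinarith [abs_nonneg (1 - l)]
  have hgeom := (hasSum_nat_add_iff' 1).2 <| hasSum_one_sub_pow_mul_pow (m := 1 - l)
    (by rwa [norm_of_nonneg hx₀.le]) (by rwa [norm_eq_abs])
  have hpow : ∀ k : ℕ, x ^ (k + 1) = exp (-(((k : ℝ) + 1) * (t.1 + t.2))) := fun k ↦ by
    rw [← exp_nat_mul]
    push_cast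
    ring_nf
  have hsplit : l * t.1 * x / ((1 - x) * (1 + (l - 1) * x))
      = t.1 * ((1 - x)⁻¹ - (1 - (1 - l) * x)⁻¹) := by
    rw [inv_one_sub_sub_inv_one_sub_mul (by linarith) (by linarith [le_abs_self ((1 - l) * x)])]
    ring
  rw [hsplit]
  simp only [Finset.sum_range_one, pow_zero, sub_self, zero_mul, sub_zero] at hgeom
  exact (hgeom.mul_left t.1).congr_fun fun k ↦ by rw [← hpow]; ring

/-- For `λ ∈ (0,2]`,
`∫_{(0,∞)²} λ t₁ e^{−(t₁+t₂)}/[(1−e^{−(t₁+t₂)})(1+(λ−1)e^{−(t₁+t₂)})] = ∑_{k≥1} (1−(1−λ)^k)/k³`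
(`= ζ(3) − Li₃(1−λ)`), the integral being finite and the series convergent. -/
theorem statement16 (l : ℝ) (hl : l ∈ Set.Ioc (0:ℝ) 2) :
    IntegrableOn
      (fun t : ℝ × ℝ => l * t.1 * Real.exp (-(t.1 + t.2)) /
        ((1 - Real.exp (-(t.1 + t.2))) * (1 + (l - 1) * Real.exp (-(t.1 + t.2)))))
      (Set.Ioi (0:ℝ) ×ˢ Set.Ioi (0:ℝ)) ∧
    Summable (fun k : ℕ => (1 - (1 - l) ^ (k + 1)) / ((k : ℝ) + 1) ^ 3) ∧
    (∫ t : ℝ × ℝ in Set.Ioi (0:ℝ) ×ˢ Set.Ioi (0:ℝ),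
        l * t.1 * Real.exp (-(t.1 + t.2)) /
          ((1 - Real.exp (-(t.1 + t.2))) * (1 + (l - 1) * Real.exp (-(t.1 + t.2)))))
      = ∑' k : ℕ, (1 - (1 - l) ^ (k + 1)) / ((k : ℝ) + 1) ^ 3 := by
  have hm : |1 - l| ≤ 1 := abs_le.2 ⟨by linarith [hl.2], by linarith [hl.1]⟩
  set S : Set (ℝ × ℝ) := Ioi 0 ×ˢ Ioi 0
  have hS : MeasurableSet S := measurableSet_Ioi.prod measurableSet_Ioi
  set F : ℕ → ℝ × ℝ → ℝ := fun k t ↦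
    (1 - (1 - l) ^ (k + 1)) * (t.1 * exp (-(((k : ℝ) + 1) * (t.1 + t.2))))
  have hF_int (k : ℕ) : IntegrableOn (F k) S :=
    (integrableOn_fst_mul_exp_neg_mul_add (by positivity)).const_mul _
  have hF_integral (k : ℕ) : ∫ t in S, F k t = (1 - (1 - l) ^ (k + 1)) / ((k : ℝ) + 1) ^ 3 := by
    rw [integral_const_mul, setIntegral_fst_mul_exp_neg_mul_add (by positivity), mul_one_div]
  have hF_nonneg (k : ℕ) (t : ℝ × ℝ) (ht : t ∈ S) : 0 ≤ F k t :=
    mul_nonneg (one_sub_pow_mem_Icc hm _).1 (mul_nonneg ht.1.out.le (exp_pos _).le)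
  have hsum := summable_one_sub_pow_div_succ_pow_three hm
  have hF_sum : Summable fun k ↦ ∫ t in S, ‖F k t‖ := by
    refine hsum.congr fun k ↦ ?_
    rw [← hF_integral, setIntegral_congr_fun hS fun t ht ↦ norm_of_nonneg (hF_nonneg k t ht)]
  have hf : ∀ᵐ t ∂volume.restrict S, HasSum (F · t) _ :=
    (ae_restrict_mem hS).mono fun t ht ↦ hasSum_one_sub_pow_mul_fst_mul_exp_neg hm ht
  refine ⟨integrable_of_hasSum_of_summable_integral_norm hF_int hF_sum hf, hsum, ?_⟩
  exact ((hasSum_integral_of_hasSum_of_summable_integral_norm hF_int hF_sum hf).congr_fun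
    fun k ↦ (hF_integral k).symm).tsum_eq.symm
end

section
/- For every real c > 0 and every s ∈ (0, 1], setting k_n = ⌊c·n^s⌋, one has, as n → ∞: ln( binom(n², k_n) / (k_n!·(k_n+1)!) ) = c(2−3s)·n^s·ln n + 3c(1 − ln c)·n^s + o(n^s). (This quantity is the expected number of convex chains with k_n vertices among n² independent uniform points of the square [0,n]², since k points uniform in [0,1]² form with (0,0) and (1,1) a convex chain with probability 1/(k!(k+1)!).) -/
/-!
With `x = c n^s`, `k = ⌊x⌋₊` and `N = n²`, the quantity is
`log (N.descFactorial k) - 3 log k! - log (k + 1)`. The falling factorial is `N^k` up to a factor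
`exp (O(k²/N)) = exp (O(1))`, Stirling's bounds give `log k! = k log k - k + O(log k)`, and
replacing `k` by `x` costs `O(log n)` because `t ↦ t log t - t` has slope `log t`. Hence the
quantity is `x log N - 3 (x log x - x) + O(log n)`, which is the stated main term plus `o(n^s)`.
-/

open Real Filter Asymptotics
open scoped Nat

-- `stirlingSeq` is antitone, so it is at most `stirlingSeq 1 = e / √2`.
theorem log_factorial_le_stirling {n : ℕ} (hn : n ≠ 0) :
    log n ! ≤ n * log n - n + log n / 2 + 1 := by
  have hs : log (Stirling.stirlingSeq n) ≤ log (Stirling.stirlingSeq 1) := by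
    obtain ⟨m, rfl⟩ := Nat.exists_eq_succ_of_ne_zero hn
    exact Stirling.log_stirlingSeq'_antitone (Nat.zero_le m)
  have hn0 : (0 : ℝ) < n := by positivity
  rw [Stirling.log_stirlingSeq_formula, Stirling.log_stirlingSeq_formula,
    log_mul two_ne_zero hn0.ne', log_div hn0.ne' (exp_pos 1).ne', log_exp] at hs
  norm_num at hs
  linarith

-- Tangent-line bounds for the convex function `t ↦ t log t - t`, whose derivative is `log t`.
theorem mul_log_sub_self_sub_le {a b : ℝ} (ha : 0 < a) (hb : 0 < b) :
    (b - a) * log a ≤ (b * log b - b) - (a * log a - a) ∧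
      (b * log b - b) - (a * log a - a) ≤ (b - a) * log b := by
  have hab := one_sub_inv_le_log_of_pos (div_pos hb ha)
  have hba := one_sub_inv_le_log_of_pos (div_pos ha hb)
  rw [log_div hb.ne' ha.ne', inv_div] at hab
  rw [log_div ha.ne' hb.ne', inv_div] at hba
  constructor
  · have := mul_le_mul_of_nonneg_left hab hb.le
    rw [mul_sub, mul_one, mul_div_cancel₀ _ hb.ne'] at this
    linarith
  · have := mul_le_mul_of_nonneg_left hba ha.le
    rw [mul_sub, mul_one, mul_div_cancel₀ _ ha.ne'] at this
    linarith

theorem abs_log_descFactorial_sub_le {N k : ℕ} (h : 2 * k ≤ N) :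
    |log (N.descFactorial k) - k * log N| ≤ 2 * k ^ 2 / N := by
  rcases Nat.eq_zero_or_pos k with rfl | hk
  · simp
  have hkN : k ≤ N + 1 := by omega
  set M : ℝ := N + 1 - k
  have hMcast : ((N + 1 - k : ℕ) : ℝ) = M := by push_cast [hkN]; rfl
  have hk1 : (1 : ℝ) ≤ k := by exact_mod_cast hk
  have h2 : 2 * (k : ℝ) ≤ N := by exact_mod_cast h
  have hM0 : 0 < M := by linarith
  have hN0 : (0 : ℝ) < N := by linarith
  have hdesc : (0 : ℝ) < N.descFactorial k := by
    exact_mod_cast Nat.descFactorial_pos.2 (by omega)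
  have hupper : log (N.descFactorial k) ≤ k * log N := by
    rw [← log_pow]
    exact log_le_log hdesc (by exact_mod_cast Nat.descFactorial_le_pow N k)
  have hlower : k * log M ≤ log (N.descFactorial k) := by
    rw [← log_pow, ← hMcast]
    exact log_le_log (by rw [hMcast]; positivity)
      (by exact_mod_cast Nat.pow_sub_le_descFactorial N k)
  -- `log N - log M ≤ (N - M) / M ≤ 2 k / N` because `M ≥ N / 2`
  have hgap : log N - log M ≤ 2 * k / N := by
    have := one_sub_inv_le_log_of_pos (div_pos hM0 hN0)
    rw [log_div hM0.ne' hN0.ne', inv_div] at this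
    have : (N : ℝ) / M - 1 ≤ 2 * k / N := by
      rw [div_sub_one hM0.ne', div_le_div_iff₀ hM0 hN0]
      nlinarith
    linarith
  have := mul_le_mul_of_nonneg_left hgap (by positivity : (0 : ℝ) ≤ k)
  rw [abs_le]
  constructor
  · have e : (k : ℝ) * (2 * k / N) = 2 * k ^ 2 / N := by ring
    linarith
  · have : 0 ≤ 2 * (k : ℝ) ^ 2 / N := by positivity
    linarith

theorem log_choose_div_factorial_mul_factorial_succ {N k : ℕ} (h : k ≤ N) :
    log ((N.choose k : ℝ) / (k ! * (k + 1)! : ℝ)) =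
      log (N.descFactorial k) - 3 * log k ! - log (k + 1) := by
  have hk : (0 : ℝ) < k ! := by positivity
  have hc : (0 : ℝ) < N.choose k := by exact_mod_cast Nat.choose_pos h
  rw [Nat.descFactorial_eq_factorial_mul_choose, Nat.factorial_succ]
  push_cast
  rw [log_div hc.ne' (by positivity), log_mul hk.ne' hc.ne', log_mul hk.ne' (by positivity),
    log_mul (by positivity) hk.ne']
  ring

theorem abs_log_choose_div_factorial_sub_le {N : ℕ} {x : ℝ} (hx : 1 ≤ x) (hxN : 2 * x ≤ N) :
    |log ((N.choose ⌊x⌋₊ : ℝ) / (⌊x⌋₊ ! * (⌊x⌋₊ + 1)! : ℝ))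
        - (x * log N - 3 * (x * log x - x))|
      ≤ 2 * x ^ 2 / N + log N + 7 * log x + 4 := by
  set k := ⌊x⌋₊
  have hkx : (k : ℝ) ≤ x := Nat.floor_le (by linarith)
  have hxk : x < k + 1 := Nat.lt_floor_add_one x
  have hk1 : 1 ≤ k := Nat.le_floor (by exact_mod_cast hx)
  have hk1' : (1 : ℝ) ≤ k := by exact_mod_cast hk1
  have h2k : 2 * k ≤ N := by exact_mod_cast (by linarith : 2 * (k : ℝ) ≤ N)
  have hN1 : (1 : ℝ) ≤ N := by linarith
  have hdesc := abs_log_descFactorial_sub_le h2k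
  have hfact_lo := Stirling.le_log_factorial_stirling (n := k) (by omega)
  have hfact_hi := log_factorial_le_stirling (n := k) (by omega)
  have hlogk : log k ≤ log x := log_le_log (by linarith) hkx
  have hlogk0 : 0 ≤ log (k : ℝ) := log_nonneg hk1'
  have hlogN0 : 0 ≤ log (N : ℝ) := log_nonneg hN1
  have hg := mul_log_sub_self_sub_le (by linarith : (0 : ℝ) < k) (by linarith : 0 < x)
  have hg_lo : 0 ≤ (x * log x - x) - (k * log k - k) :=
    le_trans (mul_nonneg (by linarith) hlogk0) hg.1
  have hg_hi : (x * log x - x) - (k * log k - k) ≤ log x := by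
    nlinarith [hg.2, mul_le_mul_of_nonneg_right (by linarith : x - k ≤ 1) (hlogk0.trans hlogk)]
  have hkN_lo : -log N ≤ (k - x) * log N := by nlinarith
  have hkN_hi : (k - x) * log N ≤ 0 := mul_nonpos_of_nonpos_of_nonneg (by linarith) hlogN0
  have hlogk1 : log (k + 1) ≤ log 2 + log x := by
    rw [← log_mul two_ne_zero (by linarith)]
    exact log_le_log (by linarith) (by linarith)
  have hlogk1_0 : 0 ≤ log (k + 1 : ℝ) := log_nonneg (by linarith)
  have hdesc' : 2 * (k : ℝ) ^ 2 / N ≤ 2 * x ^ 2 / N := by gcongr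
  have h2pi : 0 ≤ log (2 * π) := log_nonneg (by nlinarith [pi_gt_three])
  have hlog2 : log 2 < 1 := by linarith [log_two_lt_d9]
  -- the error is `(log (N.descFactorial k) - k log N) + (k - x) log N - log (k + 1)`
  -- `- 3 (log k! - (k log k - k)) + 3 ((x log x - x) - (k log k - k))`
  rw [log_choose_div_factorial_mul_factorial_succ (by omega)]
  rw [abs_le] at hdesc ⊢
  constructor <;> linarith [hdesc.1, hdesc.2]

theorem abs_log_choose_sq_div_factorial_sub_le {c s : ℝ} {n : ℕ} (hc : 0 < c) (hs : s ≤ 1)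
    (hx : 1 ≤ c * (n : ℝ) ^ s) (hn : 2 * c ≤ n) :
    |log ((Nat.choose (n ^ 2) ⌊c * (n : ℝ) ^ s⌋₊ : ℝ) /
          ((Nat.factorial ⌊c * (n : ℝ) ^ s⌋₊ : ℝ) *
            (Nat.factorial (⌊c * (n : ℝ) ^ s⌋₊ + 1) : ℝ)))
        - (c * (2 - 3 * s) * (n : ℝ) ^ s * log n + 3 * c * (1 - log c) * (n : ℝ) ^ s)|
      ≤ 2 * c ^ 2 + 4 + 7 * |log c| + 9 * log n := by
  have hn1 : (1 : ℝ) ≤ n := Nat.one_le_cast.2 (Nat.cast_pos (α := ℝ) |>.1 (by linarith))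
  have hn0 : (0 : ℝ) < n := by linarith
  have hns : (n : ℝ) ^ s ≤ n := rpow_le_self_of_one_le hn1 hs
  have hxn : c * (n : ℝ) ^ s ≤ c * n := mul_le_mul_of_nonneg_left hns hc.le
  have hN : ((n ^ 2 : ℕ) : ℝ) = (n : ℝ) ^ 2 := by push_cast; ring
  have hxN : 2 * (c * (n : ℝ) ^ s) ≤ ((n ^ 2 : ℕ) : ℝ) := by rw [hN]; nlinarith
  have key := abs_log_choose_div_factorial_sub_le hx hxN
  have hlogN : log ((n ^ 2 : ℕ) : ℝ) = 2 * log n := by rw [hN, log_pow]; norm_num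
  have hlogx : log (c * (n : ℝ) ^ s) = log c + s * log n := by
    rw [log_mul hc.ne' (by positivity), log_rpow hn0]
  rw [hlogN, hlogx] at key
  have hmain : c * (n : ℝ) ^ s * (2 * log n)
        - 3 * (c * (n : ℝ) ^ s * (log c + s * log n) - c * (n : ℝ) ^ s)
      = c * (2 - 3 * s) * (n : ℝ) ^ s * log n + 3 * c * (1 - log c) * (n : ℝ) ^ s := by ring
  rw [hmain] at key
  refine key.trans ?_
  have h1 : 2 * (c * (n : ℝ) ^ s) ^ 2 / ((n ^ 2 : ℕ) : ℝ) ≤ 2 * c ^ 2 := by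
    rw [hN, div_le_iff₀ (by positivity)]
    nlinarith [mul_le_mul hxn hxn (by positivity) (by positivity)]
  have h2 : s * log n ≤ log n := by nlinarith [log_nonneg hn1]
  linarith [le_abs_self (log c)]

/-- For `c > 0` and `s ∈ (0,1]`, with `k_n = ⌊c·n^s⌋`, the expected number of convex chains
with `k_n` vertices among `n²` independent uniform points of `[0,n]²` satisfies
`ln(binom(n², k_n)/(k_n!·(k_n+1)!)) = c(2−3s)·n^s·ln n + 3c(1−ln c)·n^s + o(n^s)`. -/
theorem statement19 (c s : ℝ) (hc : 0 < c) (hs : s ∈ Set.Ioc (0:ℝ) 1) :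
    (fun n : ℕ =>
        Real.log ((Nat.choose (n ^ 2) ⌊c * (n : ℝ) ^ s⌋₊ : ℝ) /
            ((Nat.factorial ⌊c * (n : ℝ) ^ s⌋₊ : ℝ) *
              (Nat.factorial (⌊c * (n : ℝ) ^ s⌋₊ + 1) : ℝ)))
          - (c * (2 - 3 * s) * (n : ℝ) ^ s * Real.log n
              + 3 * c * (1 - Real.log c) * (n : ℝ) ^ s))
      =o[atTop] (fun n : ℕ => (n : ℝ) ^ s) := by
  obtain ⟨hs0, hs1⟩ := hs
  have hns : Tendsto (fun n : ℕ => (n : ℝ) ^ s) atTop atTop :=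
    (tendsto_rpow_atTop hs0).comp tendsto_natCast_atTop_atTop
  have hlog : (fun n : ℕ => 1 + log n) =o[atTop] (fun n : ℕ => (n : ℝ) ^ s) :=
    ((isLittleO_one_left_iff ℝ).2 (tendsto_norm_atTop_atTop.comp hns)).add
      ((isLittleO_log_rpow_atTop hs0).comp_tendsto tendsto_natCast_atTop_atTop)
  refine IsBigO.trans_isLittleO (IsBigO.of_bound (2 * c ^ 2 + 4 + 7 * |log c| + 9) ?_) hlog
  filter_upwards [(hns.const_mul_atTop hc).eventually_ge_atTop 1,
    tendsto_natCast_atTop_atTop.eventually_ge_atTop (2 * c), eventually_ge_atTop 1] with n hx hn hn1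
  have hlogn : 0 ≤ log n := log_nonneg (by exact_mod_cast hn1)
  rw [norm_eq_abs, norm_of_nonneg (by positivity)]
  refine (abs_log_choose_sq_div_factorial_sub_le hc hs1 hx hn).trans ?_
  nlinarith [abs_nonneg (log c)]
end
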